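/- arXiv:2402.05530 — 7 statements merged into one kernel-verified Lean document; each statement's English description precedes it below -/
import Mathlib

section
/- For every positive integer k and every nonnegative integer n, the number of plane partition diamonds of length k of n satisfies D_k(n) = Σ_{J ⊆ {α_k+1, α_k+2, …, k}} p_{a[k]}(n − m_J), where m_J = Σ_{i∈J}(3i−1) and p_{a[k]}(m) = 0 when m < 0. -/
/-!
Record in a diamond the set `F ⊆ {1, …, k}` of blocks `i` with `a_{3i-1} < a_{3i}`. Exchanging these
two entries for `i ∈ F` and subtracting the staircase `j ↦ #{i ∈ F | j ≤ 3i - 1}` turns the diamond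
bijectively into a weakly decreasing sequence of length `3k + 1`, i.e. the conjugate of a partition
into parts `≤ 3k + 1`, and lowers the size by `m_F`. So the generating function of `D_k` is
`∏_{i ≤ k} (1 + q^{3i-1}) / ∏_{j ≤ 3k+1} (1 - q^j)`. For `i ≤ α_k` the part `6i - 2` occurs and
`(1 + q^{3i-1}) / (1 - q^{6i-2}) = 1 / (1 - q^{3i-1})`: bijectively, the flag `i` and the
multiplicity `x` of `6i - 2` merge into the multiplicity `2x + [i ∈ F]` of the part
`3i - 1 = a[k]_{6i-2}`.
-/

open Finset

/-- The plane partition diamond condition of length `k` on `a : Fin (3k+1) → ℕ`,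
where `a i` (0-indexed) corresponds to `a_{i+1}` (1-indexed). -/
def IsDiamond (k : ℕ) (a : Fin (3 * k + 1) → ℕ) : Prop :=
  ∀ i : ℕ, ∀ _ : i < k,
    a ⟨3 * i + 1, by omega⟩ ≤ a ⟨3 * i, by omega⟩ ∧
    a ⟨3 * i + 2, by omega⟩ ≤ a ⟨3 * i, by omega⟩ ∧
    a ⟨3 * i + 3, by omega⟩ ≤ a ⟨3 * i + 1, by omega⟩ ∧
    a ⟨3 * i + 3, by omega⟩ ≤ a ⟨3 * i + 2, by omega⟩

/-- `ppD k n`: the number of plane partition diamonds of length `k` of `n`. -/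
noncomputable def ppD (k n : ℕ) : ℕ :=
  Nat.card {a : Fin (3 * k + 1) → ℕ // IsDiamond k a ∧ ∑ i, a i = n}

/-- The restricted partition function `p_a(n)` for a sequence `a = (a_1, …, a_r)`. -/
noncomputable def rp {r : ℕ} (a : Fin r → ℕ) (n : ℕ) : ℕ :=
  Nat.card {x : Fin r → ℕ // ∑ i, a i * x i = n}

/-- The sequence `a[k]`, 0-indexed: `seqA k i = a[k]_{i+1}`. -/
def seqA (k : ℕ) : Fin (3 * k + 1) → ℕ := fun i =>
  if ((i : ℕ) + 1) % 6 = 4 then ((i : ℕ) + 1) / 2 else (i : ℕ) + 1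

/-- `α_k = ⌊(k+1)/2⌋`. -/
def alphaK (k : ℕ) : ℕ := (k + 1) / 2

/-- `m_J = ∑_{i ∈ J} (3i − 1)`. -/
def mJ (J : Finset ℕ) : ℕ := ∑ i ∈ J, (3 * i - 1)

/-- `A_k = {1 ≤ j ≤ 3k+1 : j ≢ 4 (mod 6)}`. -/
def setA (k : ℕ) : Finset ℕ := (Finset.Icc 1 (3 * k + 1)).filter (fun j => j % 6 ≠ 4)

/-- `D[k] = lcm A_k`. -/
def DK (k : ℕ) : ℕ := (setA k).lcm id

/-- `β_k = 5α_k − 2` if `k` is odd, `β_k = 5α_k + 1` if `k` is even. -/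
def betaK (k : ℕ) : ℕ := if k % 2 = 1 then 5 * alphaK k - 2 else 5 * alphaK k + 1

/-- `φ_k(j) = j + ⌈(j−3)/5⌉` (the value is a nonnegative integer for `j ≥ 1`). -/
def phiK (j : ℕ) : ℕ := ((j : ℤ) + ⌈((j : ℚ) - 3) / 5⌉).toNat

/-- `ψ_k(j) = j − ⌈(j−3)/6⌉` (the value is a nonnegative integer for `j ≥ 1`). -/
def psiK (j : ℕ) : ℕ := ((j : ℤ) - ⌈((j : ℚ) - 3) / 6⌉).toNat

/-- `B'_k = {j ∈ B_k : j ≡ 2 or 4 (mod 5), j ≤ φ_k⁻¹(3α_k − 1)}`. -/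
def setB' (k : ℕ) : Finset ℕ :=
  (Finset.Icc 1 (betaK k)).filter
    (fun j => (j % 5 = 2 ∨ j % 5 = 4) ∧ j ≤ psiK (3 * alphaK k - 1))

/-- `ε_k(j) = 2` if `j ∈ B'_k`, else `1`. -/
def epsK (k j : ℕ) : ℕ := if j ∈ setB' k then 2 else 1

/-- `s_k(t_1, …, t_{β_k}) = ∏_{j ∈ B'_k} (1 + min{t_j, 2(D[k]/φ_k(j) − 1) − t_j})`. -/
def sK (k : ℕ) (t : ℕ → ℕ) : ℕ :=
  ∏ j ∈ setB' k, (1 + min (t j) (2 * (DK k / phiK j - 1) - t j))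

/-- Turn a `Fin β`-indexed tuple into a 1-indexed family: `tOf t j = t_j` for `1 ≤ j ≤ β`. -/
def tOf {β : ℕ} (t : Fin β → ℕ) : ℕ → ℕ := fun j =>
  if h : 1 ≤ j ∧ j ≤ β then t ⟨j - 1, by omega⟩ else 0

/-- Unsigned Stirling numbers of the first kind: `x(x+1)⋯(x+r−1) = ∑_k stirling1 r k * x^k`. -/
def stirling1 : ℕ → ℕ → ℕ
  | 0, 0 => 1
  | 0, _ + 1 => 0
  | _ + 1, 0 => 0
  | n + 1, m + 1 => stirling1 n m + n * stirling1 n (m + 1)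

lemma card_eq_card_of_invOn {α β : Type*} {p : α → Prop} {q : β → Prop} (f : α → β) (g : β → α)
    (hf : ∀ x, p x → q (f x)) (hg : ∀ y, q y → p (g y))
    (hgf : ∀ x, p x → g (f x) = x) (hfg : ∀ y, q y → f (g y) = y) :
    Nat.card {x // p x} = Nat.card {y // q y} :=
  Nat.card_congr (Set.BijOn.equiv f (Set.InvOn.bijOn ⟨hgf, hfg⟩ hf hg))

lemma card_eq_sum_card_fiber {α β : Type*} [DecidableEq β] {p : α → Prop} (hp : {x | p x}.Finite)
    (f : α → β) (s : Finset β) (hf : ∀ x, p x → f x ∈ s) :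
    Nat.card {x // p x} = ∑ b ∈ s, Nat.card {x // p x ∧ f x = b} := by
  have : Finite {x // p x} := hp.to_subtype
  let g : {x // p x} → s := fun x => ⟨f x, hf x x.2⟩
  rw [← Nat.card_congr (Equiv.sigmaFiberEquiv g), Nat.card_sigma, ← sum_coe_sort s]
  refine Fintype.sum_congr _ _ fun b => Nat.card_congr ?_
  exact (Equiv.subtypeEquivRight fun x => by simp [g, Subtype.ext_iff]).trans
    (Equiv.subtypeSubtypeEquivSubtypeInter p (fun x => f x = b))

lemma sum_Icc_one_eq_sum_fin {M : Type*} [AddCommMonoid M] (f : ℕ → M) (r : ℕ) :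
    ∑ j ∈ Icc 1 r, f j = ∑ i : Fin r, f (i + 1) := by
  rw [Fin.sum_univ_eq_sum_range (fun i => f (i + 1)), ← Ico_add_one_right_eq_Icc,
    sum_Ico_eq_sum_range]
  simp [add_comm]

lemma tOf_add_one {r : ℕ} (a : Fin r → ℕ) (i : Fin r) : tOf a (i + 1) = a i := by
  simp [tOf]

lemma tOf_apply_of_lt {r : ℕ} (a : Fin r → ℕ) {j : ℕ} (hj : j < r) : tOf a (j + 1) = a ⟨j, hj⟩ :=
  tOf_add_one a ⟨j, hj⟩

lemma tOf_eq_zero {r : ℕ} (a : Fin r → ℕ) {j : ℕ} (hj : j ∉ Icc 1 r) : tOf a j = 0 := by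
  simp_all [tOf]

lemma support_tOf_subset {r : ℕ} (a : Fin r → ℕ) : (tOf a).support ⊆ Set.Icc 1 r :=
  fun j hj => by simpa using not_imp_comm.mp (tOf_eq_zero a) hj

lemma eq_zero_of_support_subset {r : ℕ} {x : ℕ → ℕ} (hx : x.support ⊆ Set.Icc 1 r) {j : ℕ}
    (hj : j ∉ Icc 1 r) : x j = 0 :=
  Function.notMem_support.mp fun h => hj (by simpa using hx h)

lemma tOf_restrict {r : ℕ} {x : ℕ → ℕ} (hx : x.support ⊆ Set.Icc 1 r) :
    tOf (fun i : Fin r => x (i + 1)) = x := by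
  funext j
  by_cases hj : j ∈ Icc 1 r
  · simp only [tOf, dif_pos (show 1 ≤ j ∧ j ≤ r by simpa using hj)]
    congr 1
    simp at hj
    omega
  · rw [tOf_eq_zero _ hj, eq_zero_of_support_subset hx hj]

lemma card_fin_eq_card_supported (r : ℕ) (P : (ℕ → ℕ) → Prop) :
    Nat.card {a : Fin r → ℕ // P (tOf a)} =
      Nat.card {x : ℕ → ℕ // x.support ⊆ Set.Icc 1 r ∧ P x} :=
  card_eq_card_of_invOn tOf (fun x i => x (i + 1))
    (fun a ha => ⟨support_tOf_subset a, ha⟩) (fun x hx => by rw [tOf_restrict hx.1]; exact hx.2)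
    (fun a _ => funext (tOf_add_one a)) (fun x hx => tOf_restrict hx.1)

lemma sum_Icc_tOf {r : ℕ} (a : Fin r → ℕ) : ∑ j ∈ Icc 1 r, tOf a j = ∑ i, a i := by
  simp [sum_Icc_one_eq_sum_fin, tOf_add_one]

lemma sum_Icc_tOf_mul_tOf {r : ℕ} (a x : Fin r → ℕ) :
    ∑ j ∈ Icc 1 r, tOf a j * tOf x j = ∑ i, a i * x i := by
  simp [sum_Icc_one_eq_sum_fin, tOf_add_one]

/-- The number of partitions of `n - m` with `x j` parts of size `w j`, `1 ≤ j ≤ N`; written with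
the offset `m` so that it is `0` when `n < m`, as `p_a(n - m)` is. -/
noncomputable def partitionCount (N : ℕ) (w : ℕ → ℕ) (m n : ℕ) : ℕ :=
  Nat.card {x : ℕ → ℕ // x.support ⊆ Set.Icc 1 N ∧ ∑ j ∈ Icc 1 N, w j * x j + m = n}

lemma partitionCount_congr {N : ℕ} {w w' : ℕ → ℕ} (h : ∀ j ∈ Icc 1 N, w j = w' j) (m n : ℕ) :
    partitionCount N w m n = partitionCount N w' m n := by
  refine Nat.card_congr (Equiv.subtypeEquivRight fun x => ?_)
  have : ∑ j ∈ Icc 1 N, w j * x j = ∑ j ∈ Icc 1 N, w' j * x j :=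
    sum_congr rfl fun j hj => by rw [h j hj]
  rw [this]

lemma partitionCount_tOf_eq_rp {r : ℕ} (a : Fin r → ℕ) (m n : ℕ) :
    partitionCount r (tOf a) m n = if m ≤ n then rp a (n - m) else 0 := by
  split_ifs with hmn
  · rw [rp, partitionCount, ← card_fin_eq_card_supported]
    refine Nat.card_congr (Equiv.subtypeEquivRight fun x => ?_)
    rw [sum_Icc_tOf_mul_tOf]
    omega
  · have : IsEmpty {x : ℕ → ℕ // x.support ⊆ Set.Icc 1 r ∧ ∑ j ∈ Icc 1 r, tOf a j * x j + m = n} :=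
      ⟨fun x => by omega⟩
    exact Nat.card_of_isEmpty

lemma finite_setOf_partitions {N : ℕ} {w : ℕ → ℕ} (hw : ∀ j ∈ Icc 1 N, 0 < w j) (m n : ℕ) :
    {x : ℕ → ℕ | x.support ⊆ Set.Icc 1 N ∧ ∑ j ∈ Icc 1 N, w j * x j + m = n}.Finite := by
  refine ((Set.finite_Iic fun _ : Fin N => n).image tOf).subset fun x ⟨hx, hsum⟩ =>
    ⟨fun i => x (i + 1), fun i => ?_, tOf_restrict hx⟩
  have hj : (i : ℕ) + 1 ∈ Icc 1 N := by simp
  calc x (i + 1) ≤ w (i + 1) * x (i + 1) := Nat.le_mul_of_pos_left _ (hw _ hj)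
    _ ≤ ∑ j ∈ Icc 1 N, w j * x j :=
      single_le_sum (f := fun j => w j * x j) (fun j _ => Nat.zero_le _) hj
    _ ≤ n := by omega

section Conjugate

variable {N : ℕ}

def tailSum (N : ℕ) (x : ℕ → ℕ) (j : ℕ) : ℕ := if j = 0 then 0 else ∑ i ∈ Icc j N, x i

def succDiff (c : ℕ → ℕ) (j : ℕ) : ℕ := if j = 0 then 0 else c j - c (j + 1)

lemma Icc_eq_insert_Icc_succ {j : ℕ} (h : j ≤ N) : Icc j N = insert j (Icc (j + 1) N) := by
  ext; simp; omega

lemma sum_Icc_mul_eq_sum_tailSum (x : ℕ → ℕ) :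
    ∑ j ∈ Icc 1 N, j * x j = ∑ j ∈ Icc 1 N, tailSum N x j := by
  have h : ∀ j ∈ Icc 1 N, tailSum N x j = ∑ i ∈ Icc j N, x i := fun j hj => by
    simp at hj; simp [tailSum, show j ≠ 0 by omega]
  rw [sum_congr rfl h, sum_comm' (t' := Icc 1 N) (s' := fun i => Icc 1 i)
    (fun j i => by simp; omega)]
  simp

lemma support_tailSum_subset (x : ℕ → ℕ) : (tailSum N x).support ⊆ Set.Icc 1 N := by
  intro j hj
  simp only [Function.mem_support, tailSum] at hj
  split_ifs at hj with h0
  · exact absurd rfl hj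
  · by_contra hjN
    exact hj (by rw [Icc_eq_empty (by simp at hjN; omega), sum_empty])

lemma antitoneOn_tailSum (x : ℕ → ℕ) : AntitoneOn (tailSum N x) (Set.Ici 1) := by
  intro i hi j hj hij
  simp only [Set.mem_Ici] at hi hj
  simp only [tailSum, if_neg (show i ≠ 0 by omega), if_neg (show j ≠ 0 by omega)]
  exact sum_le_sum_of_subset (Icc_subset_Icc_left hij)

lemma support_succDiff_subset {c : ℕ → ℕ} (hc : c.support ⊆ Set.Icc 1 N) :
    (succDiff c).support ⊆ Set.Icc 1 N := by
  intro j hj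
  simp only [Function.mem_support, succDiff] at hj
  split_ifs at hj with h0
  · exact absurd rfl hj
  · by_contra hjN
    exact hj (by rw [eq_zero_of_support_subset hc (by simpa using hjN), zero_tsub])

lemma tailSum_succDiff {c : ℕ → ℕ} (hc : c.support ⊆ Set.Icc 1 N)
    (hanti : AntitoneOn c (Set.Ici 1)) : tailSum N (succDiff c) = c := by
  have hstep : ∀ j, 1 ≤ j → c (j + 1) ≤ c j := fun j hj =>
    hanti (by simpa using hj) (by simp) (Nat.le_succ j)
  have htel : ∀ j, 1 ≤ j → j ≤ N + 1 → ∑ i ∈ Icc j N, succDiff c i = c j := by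
    intro j hj1 hjN
    induction hjN using Nat.decreasingInduction with
    | self => rw [Icc_eq_empty (by omega), sum_empty,
        eq_zero_of_support_subset hc (by simp)]
    | of_succ j hjN ih =>
      rw [Icc_eq_insert_Icc_succ (by omega), sum_insert (by simp), ih (by omega)]
      simp only [succDiff, if_neg (show j ≠ 0 by omega)]
      have := hstep j hj1
      omega
  funext j
  rcases Nat.eq_zero_or_pos j with rfl | hj
  · simp [tailSum, eq_zero_of_support_subset hc (show 0 ∉ Icc 1 N by simp)]
  · by_cases hjN : j ≤ N + 1
    · simp only [tailSum, if_neg (show j ≠ 0 by omega)]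
      exact htel j hj hjN
    · rw [eq_zero_of_support_subset (support_tailSum_subset _) (by simp; omega),
        eq_zero_of_support_subset hc (by simp; omega)]

lemma succDiff_tailSum {x : ℕ → ℕ} (hx : x.support ⊆ Set.Icc 1 N) :
    succDiff (tailSum N x) = x := by
  funext j
  rcases Nat.eq_zero_or_pos j with rfl | hj
  · simp [succDiff, eq_zero_of_support_subset hx (show 0 ∉ Icc 1 N by simp)]
  · by_cases hjN : j ≤ N
    · simp only [succDiff, tailSum, if_neg (show j ≠ 0 by omega), if_neg (show j + 1 ≠ 0 by omega),
        Icc_eq_insert_Icc_succ hjN, sum_insert (show j ∉ Icc (j + 1) N by simp)]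
      omega
    · simp only [succDiff, tailSum, if_neg (show j ≠ 0 by omega), if_neg (show j + 1 ≠ 0 by omega),
        Icc_eq_empty (show ¬ j ≤ N by omega), Icc_eq_empty (show ¬ j + 1 ≤ N by omega), sum_empty,
        eq_zero_of_support_subset hx (show j ∉ Icc 1 N by simp; omega), tsub_zero]

/-- An antitone `c` is the conjugate of the partition with `c j - c (j + 1)` parts equal to `j`. -/
lemma card_antitone_eq_partitionCount (m n : ℕ) :
    Nat.card {c : ℕ → ℕ // c.support ⊆ Set.Icc 1 N ∧ AntitoneOn c (Set.Ici 1) ∧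
      ∑ j ∈ Icc 1 N, c j + m = n} = partitionCount N (fun j => j) m n :=
  card_eq_card_of_invOn succDiff (tailSum N)
    (fun c ⟨hc, hanti, hsum⟩ => ⟨support_succDiff_subset hc, by
      rwa [sum_Icc_mul_eq_sum_tailSum, tailSum_succDiff hc hanti]⟩)
    (fun x ⟨hx, hsum⟩ => ⟨support_tailSum_subset x, antitoneOn_tailSum x, by
      rwa [← sum_Icc_mul_eq_sum_tailSum]⟩)
    (fun c ⟨hc, hanti, _⟩ => tailSum_succDiff hc hanti)
    (fun x ⟨hx, _⟩ => succDiff_tailSum hx)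

end Conjugate

section Halving

variable {N : ℕ} {S L : Finset ℕ} {v x y : ℕ → ℕ}

def halveWeights (S : Finset ℕ) (v : ℕ → ℕ) (j : ℕ) : ℕ := if j ∈ S then v j / 2 else v j

def halveAt (S : Finset ℕ) (y : ℕ → ℕ) (j : ℕ) : ℕ := if j ∈ S then y j / 2 else y j

/-- Stores `L ⊆ S` in the parities at the positions of `S`; `oddPositions S` reads it back. -/
def doubleAt (S L : Finset ℕ) (x : ℕ → ℕ) (j : ℕ) : ℕ :=
  if j ∈ S then 2 * x j + (if j ∈ L then 1 else 0) else x j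

def oddPositions (S : Finset ℕ) (y : ℕ → ℕ) : Finset ℕ := {s ∈ S | y s % 2 = 1}

lemma halveAt_doubleAt : halveAt S (doubleAt S L x) = x := by
  funext j
  simp only [halveAt, doubleAt]
  split_ifs <;> omega

lemma doubleAt_halveAt : doubleAt S (oddPositions S y) (halveAt S y) = y := by
  funext j
  simp only [doubleAt, halveAt, oddPositions, mem_filter]
  split_ifs <;> simp_all <;> omega

lemma oddPositions_doubleAt (hL : L ⊆ S) : oddPositions S (doubleAt S L x) = L := by
  ext s
  rw [oddPositions, mem_filter]
  by_cases hs : s ∈ S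
  · by_cases hsL : s ∈ L <;> simp [doubleAt, hs, hsL, Nat.add_mod]
  · exact ⟨fun h => absurd h.1 hs, fun h => absurd (hL h) hs⟩

lemma support_halveAt_subset (hy : y.support ⊆ Set.Icc 1 N) :
    (halveAt S y).support ⊆ Set.Icc 1 N := by
  refine subset_trans (fun j hj => ?_) hy
  simp only [Function.mem_support, halveAt] at hj ⊢
  split_ifs at hj <;> omega

lemma support_doubleAt_subset (hS : S ⊆ Icc 1 N) (hx : x.support ⊆ Set.Icc 1 N) :
    (doubleAt S L x).support ⊆ Set.Icc 1 N := by
  intro j hj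
  by_contra hjN
  have hjS : j ∉ S := fun h => hjN (by simpa using hS h)
  simp [doubleAt, hjS, eq_zero_of_support_subset hx (by simpa using hjN)] at hj

lemma sum_halveWeights_mul_doubleAt (hS : S ⊆ Icc 1 N) (hL : L ⊆ S)
    (heven : ∀ s ∈ S, Even (v s)) :
    ∑ j ∈ Icc 1 N, halveWeights S v j * doubleAt S L x j =
      ∑ j ∈ Icc 1 N, v j * x j + ∑ s ∈ L, v s / 2 := by
  have hterm : ∀ j, halveWeights S v j * doubleAt S L x j =
      v j * x j + if j ∈ L then v j / 2 else 0 := by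
    intro j
    simp only [halveWeights, doubleAt]
    by_cases hj : j ∈ S
    · obtain ⟨r, hr⟩ := heven j hj
      have hj2 : v j / 2 = r := by omega
      simp only [if_pos hj]
      rw [hj2, hr]
      split_ifs <;> ring
    · have hjL : j ∉ L := fun h => hj (hL h)
      simp [hj, hjL]
  rw [sum_congr rfl fun j _ => hterm j, sum_add_distrib, sum_ite_mem,
    inter_eq_right.mpr (hL.trans hS)]

lemma sum_partitionCount_halve (hS : S ⊆ Icc 1 N) (heven : ∀ s ∈ S, Even (v s))
    (hv : ∀ j ∈ Icc 1 N, 0 < v j) (m n : ℕ) :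
    ∑ L ∈ S.powerset, partitionCount N v (m + ∑ s ∈ L, v s / 2) n =
      partitionCount N (halveWeights S v) m n := by
  have hw : ∀ j ∈ Icc 1 N, 0 < halveWeights S v j := by
    intro j hj
    simp only [halveWeights]
    split_ifs with hjS
    · obtain ⟨r, hr⟩ := heven j hjS
      have := hv j hj
      omega
    · exact hv j hj
  rw [partitionCount, card_eq_sum_card_fiber (finite_setOf_partitions hw m n) (oddPositions S)
    S.powerset fun y _ => mem_powerset.mpr (filter_subset _ _)]
  refine sum_congr rfl fun L hL => ?_
  rw [mem_powerset] at hL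
  refine card_eq_card_of_invOn (doubleAt S L) (halveAt S)
    (fun x ⟨hx, hsum⟩ => ⟨⟨support_doubleAt_subset hS hx, ?_⟩, oddPositions_doubleAt hL⟩)
    (fun y ⟨⟨hy, hsum⟩, hodd⟩ => ⟨support_halveAt_subset hy, ?_⟩)
    (fun x _ => halveAt_doubleAt) (fun y ⟨_, hodd⟩ => hodd ▸ doubleAt_halveAt)
  · rw [sum_halveWeights_mul_doubleAt hS hL heven]
    omega
  · rw [← doubleAt_halveAt (S := S) (y := y), hodd,
      sum_halveWeights_mul_doubleAt hS hL heven] at hsum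
    omega

end Halving

section Flags

variable {k : ℕ} {F : Finset ℕ}

/-- The involution exchanging `3i - 1` and `3i` for every `i ∈ F`. -/
def flagSwap (F : Finset ℕ) (j : ℕ) : ℕ :=
  if j % 3 = 2 ∧ (j + 1) / 3 ∈ F then j + 1
  else if j % 3 = 0 ∧ j / 3 ∈ F then j - 1 else j

lemma flagSwap_zero : flagSwap F 0 = 0 := by
  simp [flagSwap]

lemma flagSwap_three_mul_add_one (m : ℕ) : flagSwap F (3 * m + 1) = 3 * m + 1 := by
  simp [flagSwap, Nat.add_mod]

lemma flagSwap_three_mul_add_two (m : ℕ) :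
    flagSwap F (3 * m + 2) = if m + 1 ∈ F then 3 * m + 3 else 3 * m + 2 := by
  simp [flagSwap, Nat.add_mod, show (3 * m + 2 + 1) / 3 = m + 1 by omega]

lemma flagSwap_three_mul_add_three (m : ℕ) :
    flagSwap F (3 * m + 3) = if m + 1 ∈ F then 3 * m + 2 else 3 * m + 3 := by
  simp [flagSwap, show (3 * m + 3) / 3 = m + 1 by omega]

lemma eq_zero_or_exists_three_mul_add (j : ℕ) :
    j = 0 ∨ ∃ m, j = 3 * m + 1 ∨ j = 3 * m + 2 ∨ j = 3 * m + 3 := by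
  rcases Nat.eq_zero_or_pos j with h | h
  · exact Or.inl h
  · exact Or.inr ⟨(j - 1) / 3, by omega⟩

lemma flagSwap_involutive (F : Finset ℕ) : Function.Involutive (flagSwap F) := by
  intro j
  rcases eq_zero_or_exists_three_mul_add j with rfl | ⟨m, rfl | rfl | rfl⟩
  · simp only [flagSwap_zero]
  · simp only [flagSwap_three_mul_add_one]
  · by_cases h : m + 1 ∈ F <;>
      simp [flagSwap_three_mul_add_two, flagSwap_three_mul_add_three, h]
  · by_cases h : m + 1 ∈ F <;>
      simp [flagSwap_three_mul_add_two, flagSwap_three_mul_add_three, h]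

lemma flagSwap_of_notMem (hF : F ⊆ Icc 1 k) {j : ℕ} (hj : j ∉ Icc 1 (3 * k + 1)) :
    flagSwap F j = j := by
  have hF' : ∀ i ∈ F, 1 ≤ i ∧ i ≤ k := fun i hi => by simpa using hF hi
  simp only [mem_Icc, not_and_or, not_le] at hj
  unfold flagSwap
  split_ifs with h1 h2
  · have := hF' _ h1.2; omega
  · have := hF' _ h2.2; omega
  · rfl

lemma sum_comp_flagSwap (hF : F ⊆ Icc 1 k) (B : ℕ → ℕ) :
    ∑ j ∈ Icc 1 (3 * k + 1), B (flagSwap F j) = ∑ j ∈ Icc 1 (3 * k + 1), B j :=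
  Equiv.Perm.sum_comp (flagSwap_involutive F).toPerm _ B fun j hj => by
    by_contra h
    exact hj (flagSwap_of_notMem hF h)

lemma support_comp_flagSwap_subset (hF : F ⊆ Icc 1 k) {B : ℕ → ℕ}
    (hB : B.support ⊆ Set.Icc 1 (3 * k + 1)) :
    (B ∘ flagSwap F).support ⊆ Set.Icc 1 (3 * k + 1) := by
  intro j hj
  by_contra h
  replace h : j ∉ Icc 1 (3 * k + 1) := by simpa using h
  exact hj (by simp [flagSwap_of_notMem hF h, eq_zero_of_support_subset hB h])

/-- `#{i ∈ F | j ≤ 3i - 1}` for `j ≥ 1`, and `0` at `j = 0`: subtracting it from a sequence turns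
strict descents at the flagged positions `3i - 1` into weak ones. -/
def stair (F : Finset ℕ) (j : ℕ) : ℕ := #{i ∈ F | j ∈ Icc 1 (3 * i - 1)}

lemma stair_eq_add {j : ℕ} (hj : 1 ≤ j) :
    stair F j = stair F (j + 1) + #{i ∈ F | 3 * i = j + 1} := by
  rw [stair, stair, ← card_union_of_disjoint (disjoint_filter.mpr fun i _ h => by simp at h; omega),
    ← filter_or]
  congr 1
  ext i
  simp only [mem_filter, mem_Icc, and_congr_right_iff]
  omega

lemma stair_three_mul_add_one (m : ℕ) : stair F (3 * m + 1) = stair F (3 * m + 2) := by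
  rw [stair_eq_add (by omega), filter_false_of_mem fun i _ => by omega, card_empty, add_zero]

lemma stair_three_mul_add_two (m : ℕ) :
    stair F (3 * m + 2) = stair F (3 * m + 3) + if m + 1 ∈ F then 1 else 0 := by
  rw [stair_eq_add (by omega),
    filter_congr fun i _ => show 3 * i = 3 * m + 2 + 1 ↔ i = m + 1 by omega, filter_eq']
  split_ifs <;> rfl

lemma stair_three_mul_add_three (m : ℕ) : stair F (3 * m + 3) = stair F (3 * m + 4) := by
  rw [stair_eq_add (by omega), filter_false_of_mem fun i _ => by omega, card_empty, add_zero]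

lemma stair_eq_zero (hF : F ⊆ Icc 1 k) {j : ℕ} (hj : j = 0 ∨ 3 * k ≤ j) : stair F j = 0 := by
  rw [stair, card_eq_zero, filter_eq_empty_iff]
  intro i hi
  have := hF hi
  simp only [mem_Icc] at this ⊢
  omega

lemma support_stair_subset (hF : F ⊆ Icc 1 k) : (stair F).support ⊆ Set.Icc 1 (3 * k + 1) := by
  intro j hj
  by_contra h
  exact hj (stair_eq_zero hF (by simp at h; omega))

lemma sum_stair (hF : F ⊆ Icc 1 k) : ∑ j ∈ Icc 1 (3 * k + 1), stair F j = mJ F := by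
  simp only [stair, card_filter]
  rw [sum_comm, mJ]
  refine sum_congr rfl fun i hi => ?_
  have := hF hi
  simp only [mem_Icc] at this
  rw [← card_filter, filter_mem_eq_inter, inter_eq_right.mpr (Icc_subset_Icc_right (by omega)),
    Nat.card_Icc]
  omega

end Flags

section Diamonds

variable {k : ℕ} {F : Finset ℕ}

/-- `IsDiamond` for the 1-indexed sequence `(A 1, …, A (3k+1))`. -/
def IsDiamondSeq (k : ℕ) (A : ℕ → ℕ) : Prop :=
  ∀ m < k, A (3 * m + 2) ≤ A (3 * m + 1) ∧ A (3 * m + 3) ≤ A (3 * m + 1) ∧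
    A (3 * m + 4) ≤ A (3 * m + 2) ∧ A (3 * m + 4) ≤ A (3 * m + 3)

def flags (k : ℕ) (A : ℕ → ℕ) : Finset ℕ := {i ∈ Icc 1 k | A (3 * i - 1) < A (3 * i)}

lemma isDiamond_iff_isDiamondSeq_tOf (a : Fin (3 * k + 1) → ℕ) :
    IsDiamond k a ↔ IsDiamondSeq k (tOf a) := by
  refine forall₂_congr fun m hm => ?_
  rw [← tOf_apply_of_lt a (show 3 * m + 3 < 3 * k + 1 by omega),
    ← tOf_apply_of_lt a (show 3 * m + 2 < 3 * k + 1 by omega),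
    ← tOf_apply_of_lt a (show 3 * m + 1 < 3 * k + 1 by omega),
    ← tOf_apply_of_lt a (show 3 * m < 3 * k + 1 by omega)]

lemma flags_eq_iff (hF : F ⊆ Icc 1 k) (A : ℕ → ℕ) :
    flags k A = F ↔ ∀ m < k, (m + 1 ∈ F ↔ A (3 * m + 2) < A (3 * m + 3)) := by
  have hmem : ∀ m < k, (m + 1 ∈ flags k A ↔ A (3 * m + 2) < A (3 * m + 3)) := fun m hm => by
    simp only [flags, mem_filter, mem_Icc, show 3 * (m + 1) = 3 * m + 3 by ring,
      show 3 * m + 3 - 1 = 3 * m + 2 by omega]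
    omega
  constructor
  · rintro rfl
    exact hmem
  · intro h
    ext i
    by_cases hi : i ∈ Icc 1 k
    · obtain ⟨m, rfl, hm⟩ : ∃ m, i = m + 1 ∧ m < k := ⟨i - 1, by simp at hi; omega⟩
      rw [hmem m hm, h m hm]
    · exact iff_of_false (fun h' => hi (filter_subset _ _ h')) (fun h' => hi (hF h'))

lemma forall_Icc_one_three_mul_iff (P : ℕ → Prop) :
    (∀ j ∈ Icc 1 (3 * k), P j) ↔ ∀ m < k, P (3 * m + 1) ∧ P (3 * m + 2) ∧ P (3 * m + 3) := by
  constructor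
  · intro h m hm
    exact ⟨h _ (by simp; omega), h _ (by simp; omega), h _ (by simp; omega)⟩
  · intro h j hj
    simp only [mem_Icc] at hj
    rcases eq_zero_or_exists_three_mul_add j with rfl | ⟨m, rfl | rfl | rfl⟩
    · omega
    · exact (h m (by omega)).1
    · exact (h m (by omega)).2.1
    · exact (h m (by omega)).2.2

lemma diamond_block_iff (B : ℕ → ℕ) (m : ℕ) :
    ((B ∘ flagSwap F) (3 * m + 2) ≤ (B ∘ flagSwap F) (3 * m + 1) ∧
      (B ∘ flagSwap F) (3 * m + 3) ≤ (B ∘ flagSwap F) (3 * m + 1) ∧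
      (B ∘ flagSwap F) (3 * m + 4) ≤ (B ∘ flagSwap F) (3 * m + 2) ∧
      (B ∘ flagSwap F) (3 * m + 4) ≤ (B ∘ flagSwap F) (3 * m + 3)) ∧
      (m + 1 ∈ F ↔ (B ∘ flagSwap F) (3 * m + 2) < (B ∘ flagSwap F) (3 * m + 3)) ↔
    B (3 * m + 2) + stair F (3 * m + 1) ≤ B (3 * m + 1) + stair F (3 * m + 2) ∧
      B (3 * m + 3) + stair F (3 * m + 2) ≤ B (3 * m + 2) + stair F (3 * m + 3) ∧
      B (3 * m + 4) + stair F (3 * m + 3) ≤ B (3 * m + 3) + stair F (3 * m + 4) := by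
  have h4 : flagSwap F (3 * m + 4) = 3 * m + 4 := flagSwap_three_mul_add_one (m + 1)
  simp only [Function.comp_apply, stair_three_mul_add_one, stair_three_mul_add_two,
    stair_three_mul_add_three, flagSwap_three_mul_add_one, flagSwap_three_mul_add_two,
    flagSwap_three_mul_add_three, h4]
  by_cases h : m + 1 ∈ F <;> simp only [h, if_true, if_false, true_iff, false_iff, not_lt] <;> omega

/-- Read through `flagSwap F`, a diamond with flag set `F` is a sequence whose descents on
`[1, 3k + 1]` are weak, and strict at the flagged positions `3i - 1`. -/
lemma diamond_flags_iff_descent (hF : F ⊆ Icc 1 k) (B : ℕ → ℕ) :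
    IsDiamondSeq k (B ∘ flagSwap F) ∧ flags k (B ∘ flagSwap F) = F ↔
      ∀ j ∈ Icc 1 (3 * k), B (j + 1) + stair F j ≤ B j + stair F (j + 1) := by
  rw [flags_eq_iff hF, IsDiamondSeq, ← forall₂_and, forall_Icc_one_three_mul_iff]
  exact forall₂_congr fun m _ => diamond_block_iff B m

end Diamonds

section DiamondCount

variable {k : ℕ} {F : Finset ℕ}

lemma stair_le_of_descent (hF : F ⊆ Icc 1 k) {B : ℕ → ℕ}
    (hB : ∀ j ∈ Icc 1 (3 * k), B (j + 1) + stair F j ≤ B j + stair F (j + 1)) (j : ℕ) :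
    stair F j ≤ B j := by
  by_cases hj : j = 0 ∨ 3 * k ≤ j
  · rw [stair_eq_zero hF hj]
    exact Nat.zero_le _
  have hj1 : 1 ≤ j := by omega
  have hjk : j ≤ 3 * k := by omega
  induction hjk using Nat.decreasingInduction with
  | self => exact absurd (Or.inr le_rfl) hj
  | of_succ j hjk ih =>
    have hstep := hB j (by simp; omega)
    by_cases hj' : 3 * k ≤ j + 1
    · rw [stair_eq_zero hF (Or.inr hj')] at hstep
      omega
    · have := ih (by omega) (by omega)
      omega

lemma descent_of_isDiamondSeq (hF : F ⊆ Icc 1 k) {A : ℕ → ℕ} (hdiam : IsDiamondSeq k A)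
    (hflags : flags k A = F) : ∀ j ∈ Icc 1 (3 * k),
      (A ∘ flagSwap F) (j + 1) + stair F j ≤ (A ∘ flagSwap F) j + stair F (j + 1) := by
  have hA : (A ∘ flagSwap F) ∘ flagSwap F = A := by
    rw [Function.comp_assoc, (flagSwap_involutive F).comp_self, Function.comp_id]
  rw [← hA] at hdiam hflags
  exact (diamond_flags_iff_descent hF _).mp ⟨hdiam, hflags⟩

lemma antitoneOn_sub_stair (hF : F ⊆ Icc 1 k) {B : ℕ → ℕ}
    (hB : B.support ⊆ Set.Icc 1 (3 * k + 1))
    (hD : ∀ j ∈ Icc 1 (3 * k), B (j + 1) + stair F j ≤ B j + stair F (j + 1)) :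
    AntitoneOn (B - stair F) (Set.Ici 1) := by
  refine antitoneOn_of_succ_le Set.ordConnected_Ici fun j _ hj _ => ?_
  simp only [Set.mem_Ici] at hj
  simp only [Order.succ_eq_add_one, Pi.sub_apply]
  by_cases hjk : j ≤ 3 * k
  · have := hD j (by simp; omega)
    have := stair_le_of_descent hF hD (j + 1)
    omega
  · rw [eq_zero_of_support_subset hB (by simp; omega), Nat.zero_sub]
    exact Nat.zero_le _

lemma card_diamondSeq_flags_eq_card_antitone (hF : F ⊆ Icc 1 k) (n : ℕ) :
    Nat.card {A : ℕ → ℕ // (A.support ⊆ Set.Icc 1 (3 * k + 1) ∧ IsDiamondSeq k A ∧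
      ∑ j ∈ Icc 1 (3 * k + 1), A j = n) ∧ flags k A = F} =
    Nat.card {c : ℕ → ℕ // c.support ⊆ Set.Icc 1 (3 * k + 1) ∧ AntitoneOn c (Set.Ici 1) ∧
      ∑ j ∈ Icc 1 (3 * k + 1), c j + mJ F = n} := by
  have hσ := flagSwap_involutive F
  refine card_eq_card_of_invOn (fun A => A ∘ flagSwap F - stair F)
    (fun c => (c + stair F) ∘ flagSwap F) ?_ ?_ ?_ ?_
  · rintro A ⟨⟨hA, hdiam, hsum⟩, hflags⟩
    have hD := descent_of_isDiamondSeq hF hdiam hflags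
    have hB := support_comp_flagSwap_subset hF hA
    refine ⟨fun j hj => hB (by simp at hj ⊢; omega), antitoneOn_sub_stair hF hB hD, ?_⟩
    rw [← sum_stair hF, ← sum_add_distrib, ← hsum, ← sum_comp_flagSwap hF A]
    exact sum_congr rfl fun j _ => tsub_add_cancel_of_le (stair_le_of_descent hF hD j)
  · rintro c ⟨hc, hanti, hsum⟩
    have hD : ∀ j ∈ Icc 1 (3 * k), (c + stair F) (j + 1) + stair F j ≤
        (c + stair F) j + stair F (j + 1) := fun j hj => by
      have := hanti (by simp at hj ⊢; omega) (by simp) (show j ≤ j + 1 by omega)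
      simp only [Pi.add_apply]
      omega
    obtain ⟨hdiam, hflags⟩ := (diamond_flags_iff_descent hF _).mpr hD
    refine ⟨⟨support_comp_flagSwap_subset hF
      ((Function.support_add _ _).trans (Set.union_subset hc (support_stair_subset hF))),
      hdiam, ?_⟩, hflags⟩
    rw [Function.comp_def, sum_comp_flagSwap hF (c + stair F)]
    simp only [Pi.add_apply]
    rw [sum_add_distrib, sum_stair hF, hsum]
  · rintro A ⟨⟨-, hdiam, -⟩, hflags⟩
    funext j
    have hle := stair_le_of_descent hF (descent_of_isDiamondSeq hF hdiam hflags) (flagSwap F j)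
    simp only [Function.comp_apply, Pi.add_apply, Pi.sub_apply, hσ j] at hle ⊢
    exact tsub_add_cancel_of_le hle
  · rintro c -
    funext j
    simp [hσ j]

end DiamondCount

lemma ppD_eq_sum_partitionCount (k n : ℕ) :
    ppD k n = ∑ F ∈ (Icc 1 k).powerset, partitionCount (3 * k + 1) (fun j => j) (mJ F) n := by
  have hfin : {A : ℕ → ℕ | A.support ⊆ Set.Icc 1 (3 * k + 1) ∧ IsDiamondSeq k A ∧
      ∑ j ∈ Icc 1 (3 * k + 1), A j = n}.Finite :=
    (finite_setOf_partitions (w := fun _ => 1) (fun _ _ => Nat.one_pos) 0 n).subset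
      fun A hA => ⟨hA.1, by simpa using hA.2.2⟩
  calc ppD k n = Nat.card {a : Fin (3 * k + 1) → ℕ //
        IsDiamondSeq k (tOf a) ∧ ∑ j ∈ Icc 1 (3 * k + 1), tOf a j = n} :=
        Nat.card_congr (Equiv.subtypeEquivRight fun a => by
          rw [isDiamond_iff_isDiamondSeq_tOf, sum_Icc_tOf])
    _ = _ := card_fin_eq_card_supported _
        fun A => IsDiamondSeq k A ∧ ∑ j ∈ Icc 1 (3 * k + 1), A j = n
    _ = _ := card_eq_sum_card_fiber hfin (flags k) _
        fun A _ => mem_powerset.mpr (filter_subset _ _)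
    _ = _ := sum_congr rfl fun F hF => by
        rw [card_diamondSeq_flags_eq_card_antitone (mem_powerset.mp hF),
          card_antitone_eq_partitionCount]

lemma sum_powerset_union {α M : Type*} [DecidableEq α] [AddCommMonoid M] {s t : Finset α}
    (h : Disjoint s t) (f : Finset α → M) :
    ∑ F ∈ (s ∪ t).powerset, f F = ∑ J ∈ s.powerset, ∑ L ∈ t.powerset, f (J ∪ L) := by
  have hunion : ∀ F ⊆ s ∪ t, F ∩ s ∪ F ∩ t = F := fun F hF => by
    rw [← inter_union_distrib_left, inter_eq_left.mpr hF]
  rw [← sum_product']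
  refine sum_nbij' (fun F => (F ∩ s, F ∩ t)) (fun p => p.1 ∪ p.2) (fun F _ => by simp)
    (fun p hp => ?_) (fun F hF => hunion F (mem_powerset.mp hF)) (fun p hp => ?_)
    (fun F hF => by rw [hunion F (mem_powerset.mp hF)])
  · simp only [mem_product, mem_powerset] at hp ⊢
    exact union_subset_union hp.1 hp.2
  · simp only [mem_product, mem_powerset] at hp
    simp only [union_inter_distrib_right, inter_eq_left.mpr hp.1, inter_eq_left.mpr hp.2,
      disjoint_iff_inter_eq_empty.mp (h.mono_left hp.1),
      disjoint_iff_inter_eq_empty.mp (h.symm.mono_left hp.2), union_empty, empty_union]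

lemma tOf_seqA {k j : ℕ} (hj : j ∈ Icc 1 (3 * k + 1)) :
    tOf (seqA k) j = if j % 6 = 4 then j / 2 else j := by
  obtain ⟨i, rfl⟩ : ∃ i, j = i + 1 := ⟨j - 1, by simp at hj; omega⟩
  rw [tOf_apply_of_lt _ (by simp at hj; omega)]
  rfl

/-- The factors `1 + q^(3i-1)` with `i ≤ α_k` merge with the parts `6i - 2 ≤ 3k + 1` of the
partition, since `(1 + q^(3i-1)) / (1 - q^(6i-2)) = 1 / (1 - q^(3i-1))`. -/
lemma sum_partitionCount_small_flags (k m n : ℕ) :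
    ∑ L ∈ (Icc 1 (alphaK k)).powerset, partitionCount (3 * k + 1) (fun j => j) (m + mJ L) n =
      partitionCount (3 * k + 1) (tOf (seqA k)) m n := by
  set S := (Icc 1 (alphaK k)).image fun i => 6 * i - 2 with hSdef
  have hinj : Set.InjOn (fun i => 6 * i - 2) (Icc 1 (alphaK k)) := fun i hi i' hi' h => by
    simp at hi hi' h; omega
  have hS : S ⊆ Icc 1 (3 * k + 1) := fun s hs => by
    simp only [hSdef, alphaK, mem_image, mem_Icc] at hs ⊢; omega
  have hmemS : ∀ j ∈ Icc 1 (3 * k + 1), (j ∈ S ↔ j % 6 = 4) := fun j hj => by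
    simp only [hSdef, alphaK, mem_image, mem_Icc] at hj ⊢
    exact ⟨fun ⟨i, hi, hij⟩ => by omega, fun h => ⟨(j + 2) / 6, by omega, by omega⟩⟩
  have hweights : partitionCount (3 * k + 1) (tOf (seqA k)) m n =
      partitionCount (3 * k + 1) (halveWeights S fun j => j) m n :=
    partitionCount_congr (fun j hj => by
      rw [tOf_seqA hj]
      simp only [halveWeights, hmemS j hj]) m n
  rw [hweights, ← sum_partitionCount_halve hS (fun s hs => ?_) (fun j hj => by simp at hj; omega),
    hSdef, powerset_image, sum_image (image_injOn_powerset_of_injOn hinj)]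
  · refine sum_congr rfl fun L hL => ?_
    rw [sum_image (hinj.mono (mem_powerset.mp hL)), mJ]
    congr 2
    exact sum_congr rfl fun i _ => by omega
  · obtain ⟨i, -, rfl⟩ := mem_image.mp hs
    exact ⟨3 * i - 1, by omega⟩

theorem stmt0_general (k : ℕ) (n : ℕ) :
    ppD k n = ∑ J ∈ (Finset.Icc (alphaK k + 1) k).powerset,
      (if mJ J ≤ n then rp (seqA k) (n - mJ J) else 0) := by
  have hsplit : Icc 1 k = Icc (alphaK k + 1) k ∪ Icc 1 (alphaK k) := by
    ext i; simp [alphaK]; omega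
  have hdisj : Disjoint (Icc (alphaK k + 1) k) (Icc 1 (alphaK k)) :=
    disjoint_left.mpr fun i hi hi' => by simp at hi hi'; omega
  rw [ppD_eq_sum_partitionCount, hsplit, sum_powerset_union hdisj]
  refine sum_congr rfl fun J hJ => ?_
  rw [← partitionCount_tOf_eq_rp, ← sum_partitionCount_small_flags]
  refine sum_congr rfl fun L hL => ?_
  rw [mJ, sum_union (hdisj.mono (mem_powerset.mp hJ) (mem_powerset.mp hL))]
  rfl

/-- `D_k(n) = ∑_{J ⊆ {α_k+1,…,k}} p_{a[k]}(n − m_J)`, where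
`p_{a[k]}(n − m_J) = 0` when `n < m_J`. -/
theorem stmt0 (k : ℕ) (hk : 1 ≤ k) (n : ℕ) :
    ppD k n = ∑ J ∈ (Finset.Icc (alphaK k + 1) k).powerset,
      (if mJ J ≤ n then rp (seqA k) (n - mJ J) else 0) :=
  stmt0_general k n
end

section
/- For every positive integer k, the map φ_k : B_k → A_k defined by φ_k(j) = j + ⌈(j−3)/5⌉ is well defined (i.e., maps B_k into A_k) and bijective, and its inverse is the map ψ_k : A_k → B_k defined by ψ_k(j) = j − ⌈(j−3)/6⌉. -/
open Finset

/-!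
Both ceilings are integer quotients: `⌈(j - 3)/5⌉ = ⌊(j + 1)/5⌋` and `⌈(j - 3)/6⌉ = ⌊(j + 2)/6⌋`.
On residues, `φ` sends the five classes of `j` mod 5 (reading `j = 5q + r`) to `6q + r` for
`r ≤ 3` and `6q + 5` for `r = 4`, skipping exactly the class `4` mod 6, and `ψ` undoes this;
`2β_k = 5k + 2 - (k mod 2)` is precisely what makes `φ(β_k)` the largest element of `A_k`.
-/

theorem Rat.ceil_intCast_sub_div_natCast (j a : ℤ) (d : ℕ) :
    ⌈((j : ℚ) - a) / d⌉ = -((a - j) / (d : ℤ)) := by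
  have h := Rat.ceil_intCast_div_natCast (j - a) d
  rwa [Int.cast_sub, neg_sub] at h

theorem ceil_sub_three_div_five (j : ℤ) : ⌈((j : ℚ) - 3) / 5⌉ = (j + 1) / 5 := by
  have h := Rat.ceil_intCast_sub_div_natCast j 3 5
  push_cast at h
  omega

theorem ceil_sub_three_div_six (j : ℤ) : ⌈((j : ℚ) - 3) / 6⌉ = (j + 2) / 6 := by
  have h := Rat.ceil_intCast_sub_div_natCast j 3 6
  push_cast at h
  omega

theorem two_mul_betaK (k : ℕ) : 2 * betaK k = 5 * k + 2 - k % 2 := by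
  unfold betaK alphaK
  split <;> omega

theorem stmt3_general (k : ℕ) :
    let Bk : Finset ℤ := Finset.Icc 1 (betaK k : ℤ)
    let Ak : Finset ℤ := (Finset.Icc 1 (3 * (k : ℤ) + 1)).filter (fun j => j % 6 ≠ 4)
    let phi : ℤ → ℤ := fun j => j + ⌈((j : ℚ) - 3) / 5⌉
    let psi : ℤ → ℤ := fun j => j - ⌈((j : ℚ) - 3) / 6⌉
    (∀ j ∈ Bk, phi j ∈ Ak) ∧ (∀ j ∈ Ak, psi j ∈ Bk) ∧
    (∀ j ∈ Bk, psi (phi j) = j) ∧ (∀ j ∈ Ak, phi (psi j) = j) := by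
  intro Bk Ak phi psi
  have hβ := two_mul_betaK k
  simp only [Bk, Ak, phi, psi, Finset.mem_Icc, Finset.mem_filter, ceil_sub_three_div_five,
    ceil_sub_three_div_six]
  refine ⟨?_, ?_, ?_, ?_⟩ <;> intro j hj <;> omega

/-- `φ_k(j) = j + ⌈(j−3)/5⌉` maps `B_k = {1,…,β_k}` bijectively onto
`A_k = {1 ≤ j ≤ 3k+1 : j ≢ 4 (mod 6)}`, with inverse `ψ_k(j) = j − ⌈(j−3)/6⌉`. -/
theorem stmt3 (k : ℕ) (hk : 1 ≤ k) :
    let Bk : Finset ℤ := Finset.Icc 1 (betaK k : ℤ)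
    let Ak : Finset ℤ := (Finset.Icc 1 (3 * (k : ℤ) + 1)).filter (fun j => j % 6 ≠ 4)
    let phi : ℤ → ℤ := fun j => j + ⌈((j : ℚ) - 3) / 5⌉
    let psi : ℤ → ℤ := fun j => j - ⌈((j : ℚ) - 3) / 6⌉
    (∀ j ∈ Bk, phi j ∈ Ak) ∧ (∀ j ∈ Ak, psi j ∈ Bk) ∧
    (∀ j ∈ Bk, psi (phi j) = j) ∧ (∀ j ∈ Ak, phi (psi j) = j) :=
  stmt3_general k
end

section
/- For every nonnegative integer n, D_1(n) = p_{(1,2,2,3)}(n); that is, the number of quadruples (a_1,a_2,a_3,a_4) of nonnegative integers with a_1+a_2+a_3+a_4 = n, a_1 ≥ a_2, a_1 ≥ a_3, a_2 ≥ a_4 and a_3 ≥ a_4 equals the number of quadruples (x_1,x_2,x_3,x_4) of nonnegative integers with x_1 + 2x_2 + 2x_3 + 3x_4 = n. -/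
open Finset

/-!
Write the diamond as `a₁ ≥ a₂, a₃ ≥ a₄` and put `m = min a₂ a₃`, `M = max a₂ a₃`. It is determined by
`a₁ - M`, `m - a₄` and the pair `(a₄ + (a₃ - a₂), a₄ + (a₂ - a₃))` (truncated differences), and these
four parameters contribute `1`, `3`, `2`, `2` to `a₁ + a₂ + a₃ + a₄`. Conversely `a₄` is the minimum of
the pair, so every quadruple of parameters comes from exactly one diamond.
-/

lemma isDiamond_one_iff (a : Fin 4 → ℕ) :
    IsDiamond 1 a ↔ a 1 ≤ a 0 ∧ a 2 ≤ a 0 ∧ a 3 ≤ a 1 ∧ a 3 ≤ a 2 := by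
  refine ⟨fun h => h 0 one_pos, fun h i hi => ?_⟩
  obtain rfl : i = 0 := by omega
  exact h

lemma fin_four_ext {v w : Fin 4 → ℕ} (h0 : v 0 = w 0) (h1 : v 1 = w 1) (h2 : v 2 = w 2)
    (h3 : v 3 = w 3) : v = w := by
  ext i
  fin_cases i <;> assumption

def diamondParams (a : Fin 4 → ℕ) : Fin 4 → ℕ :=
  ![a 0 - max (a 1) (a 2), a 3 + (a 2 - a 1), a 3 + (a 1 - a 2), min (a 1) (a 2) - a 3]

def diamondOfParams (x : Fin 4 → ℕ) : Fin 4 → ℕ :=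
  ![max (x 1) (x 2) + x 3 + x 0, min (x 1) (x 2) + x 3 + (x 2 - x 1),
    min (x 1) (x 2) + x 3 + (x 1 - x 2), min (x 1) (x 2)]

lemma isDiamond_diamondOfParams (x : Fin 4 → ℕ) : IsDiamond 1 (diamondOfParams x) := by
  rw [isDiamond_one_iff]
  simp only [diamondOfParams, Matrix.cons_val]
  omega

def diamondEquivParams : {a : Fin 4 → ℕ // IsDiamond 1 a} ≃ (Fin 4 → ℕ) where
  toFun a := diamondParams a
  invFun x := ⟨diamondOfParams x, isDiamond_diamondOfParams x⟩
  left_inv := by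
    rintro ⟨a, ha⟩
    rw [isDiamond_one_iff] at ha
    refine Subtype.ext (fin_four_ext ?_ ?_ ?_ ?_) <;>
      simp only [diamondOfParams, diamondParams, Matrix.cons_val] <;> omega
  right_inv x := by
    refine fin_four_ext ?_ ?_ ?_ ?_ <;>
      simp only [diamondOfParams, diamondParams, Matrix.cons_val] <;> omega

lemma sum_eq_weighted_sum_diamondParams {a : Fin 4 → ℕ} (ha : IsDiamond 1 a) :
    ∑ i, a i = ∑ i, (![1, 2, 2, 3] : Fin 4 → ℕ) i * diamondParams a i := by
  rw [isDiamond_one_iff] at ha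
  simp only [Fin.sum_univ_four, diamondParams, Matrix.cons_val]
  omega

/-- `D_1(n) = p_{(1,2,2,3)}(n)` for all `n ≥ 0`. -/
theorem stmt6 (n : ℕ) : ppD 1 n = rp (![1, 2, 2, 3] : Fin 4 → ℕ) n := by
  refine Nat.card_congr
    ((Equiv.subtypeSubtypeEquivSubtypeInter (IsDiamond 1) (fun a => ∑ i, a i = n)).symm.trans
      (diamondEquivParams.subtypeEquiv fun a => ?_))
  rw [sum_eq_weighted_sum_diamondParams a.2]
  rfl
end

section
/- For every positive integer k, the following identity of formal power series in q holds: ( Σ_{n=0}^{∞} D_k(n) q^n ) · ∏_{i=1}^{3k+1} (1 − q^i) = ∏_{i=1}^{k} (1 + q^{3i−1}). -/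
open Finset

/-!
Sorting the two middle entries of every cell turns a plane partition diamond into a partition
with at most `3k + 1` parts. Recording in `J ⊆ {1, …, k}` the cells whose middle entries had to
be swapped, the sorted sequence must descend strictly at the positions `3i - 1`, `i ∈ J`, and
this is a bijection that preserves the sum. Partitions into at most `N` parts with forced strict
descents at `S ⊆ {1, …, N}` have generating function `q^(∑ S) / ∏_{i ≤ N} (1 - q^i)`, by
induction on `N`: either the `N`-th part vanishes, or all of the first `N` parts can be lowered
by one. Summing `q^(∑_{i ∈ J} (3i - 1))` over `J` gives `∏_{i ≤ k} (1 + q^(3i - 1))`.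
-/
lemma Nat.card_subtype_eq_card_and_add_card_and_not {α : Type*} (p q : α → Prop)
    [Finite {x // p x}] :
    Nat.card {x // p x} = Nat.card {x // p x ∧ q x} + Nat.card {x // p x ∧ ¬ q x} :=
  (Set.ncard_inter_add_ncard_sdiff_eq_ncard {x | p x} {x | q x} (Set.finite_coe_iff.mp ‹_›)).symm

namespace DescentChain

/-- A partition into at most `N` parts, written as an antitone sequence, with forced strict
descents `b (s - 1) > b s` at the positions `s ∈ S`. -/
def IsDescentChain (N : ℕ) (S : Finset ℕ) (b : ℕ → ℕ) : Prop :=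
  Antitone b ∧ (∀ s ∈ S, b s < b (s - 1)) ∧ b N = 0

noncomputable def count (N : ℕ) (S : Finset ℕ) (n : ℕ) : ℕ :=
  Nat.card {b : ℕ → ℕ // IsDescentChain N S b ∧ ∑ j ∈ range N, b j = n}

variable {N : ℕ} {S : Finset ℕ} {b : ℕ → ℕ}

lemma IsDescentChain.eq_zero (hb : IsDescentChain N S b) {j : ℕ} (hj : N ≤ j) : b j = 0 :=
  Nat.eq_zero_of_le_zero (hb.2.2 ▸ hb.1 hj)

lemma IsDescentChain.le_of_sum_eq (hb : IsDescentChain N S b) {n : ℕ}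
    (hn : ∑ j ∈ range N, b j = n) (j : ℕ) : b j ≤ n := by
  rcases lt_or_ge j N with hj | hj
  · exact hn ▸ single_le_sum (fun _ _ => Nat.zero_le _) (mem_range.2 hj)
  · simp [hb.eq_zero hj]

instance (N : ℕ) (S : Finset ℕ) (n : ℕ) :
    Finite {b : ℕ → ℕ // IsDescentChain N S b ∧ ∑ j ∈ range N, b j = n} := by
  refine Finite.of_injective (β := Fin N → Fin (n + 1))
    (fun b j => ⟨b.1 j, Nat.lt_succ_of_le (b.2.1.le_of_sum_eq b.2.2 j)⟩) ?_
  intro b c h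
  ext j
  rcases lt_or_ge j N with hj | hj
  · simpa using congrFun h ⟨j, hj⟩
  · rw [b.2.1.eq_zero hj, c.2.1.eq_zero hj]

lemma isDescentChain_succ_and_eq_zero_iff :
    IsDescentChain (N + 1) S b ∧ b N = 0 ↔ IsDescentChain N S b := by
  exact ⟨fun ⟨⟨hmono, hS, _⟩, hN⟩ => ⟨hmono, hS, hN⟩,
    fun hb => ⟨⟨hb.1, hb.2.1, hb.eq_zero N.le_succ⟩, hb.2.2⟩⟩

lemma IsDescentChain.notMem_of_lt (hb : IsDescentChain N S b) {s : ℕ} (hs : N < s) : s ∉ S :=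
  fun hS => by have := hb.2.1 s hS; rw [hb.eq_zero (by omega : N ≤ s - 1)] at this; omega

lemma IsDescentChain.lower (hb : IsDescentChain (N + 1) S b) (hN : b N ≠ 0) :
    IsDescentChain (N + 1) (S.erase (N + 1)) (fun j => b j - 1) := by
  refine ⟨fun i j h => Nat.sub_le_sub_right (hb.1 h) 1, fun s hs => ?_, by simp [hb.2.2]⟩
  obtain ⟨hsN, hsS⟩ := mem_erase.1 hs
  have hs_le : s ≤ N := by
    by_contra h
    exact hb.notMem_of_lt (by omega) hsS
  have := hb.2.1 s hsS
  have := hb.1 hs_le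
  show b s - 1 < b (s - 1) - 1
  omega

lemma IsDescentChain.raise (hb : IsDescentChain (N + 1) (S.erase (N + 1)) b) :
    IsDescentChain (N + 1) S (fun j => if j ≤ N then b j + 1 else 0) := by
  refine ⟨fun i j h => ?_, fun s hs => ?_, by simp⟩
  · dsimp only
    split_ifs <;> first | omega | exact Nat.succ_le_succ (hb.1 h)
  by_cases hsN : s = N + 1
  · simp [hsN]
  have hs_le : s ≤ N := by
    by_contra h
    exact hb.notMem_of_lt (by omega) (mem_erase.2 ⟨hsN, hs⟩)
  have := hb.2.1 s (mem_erase.2 ⟨hsN, hs⟩)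
  simp only [hs_le, if_true, show s - 1 ≤ N by omega]
  omega

lemma sum_range_sub_one_add {m : ℕ} {b : ℕ → ℕ} (h : ∀ j < m, 1 ≤ b j) :
    ∑ j ∈ range m, (b j - 1) + m = ∑ j ∈ range m, b j := by
  conv_lhs => enter [2]; rw [← card_range m, ← mul_one #(range m), ← smul_eq_mul,
    ← sum_const]
  rw [← sum_add_distrib]
  exact sum_congr rfl fun j hj => Nat.sub_add_cancel (h j (mem_range.1 hj))

lemma sum_range_succ_ite_add_one (N : ℕ) (c : ℕ → ℕ) :
    ∑ j ∈ range (N + 1), (if j ≤ N then c j + 1 else 0) =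
      ∑ j ∈ range (N + 1), c j + (N + 1) := by
  rw [sum_congr rfl fun j hj => if_pos (Nat.lt_succ_iff.1 (mem_range.1 hj)), sum_add_distrib,
    sum_const, card_range, smul_eq_mul, mul_one]

/-- Lowering the first `N + 1` parts by one removes the forced descent at `N + 1`
(truncated subtraction leaves the zero tail alone). -/
def lowerEquiv (N : ℕ) (S : Finset ℕ) (n : ℕ) :
    {b : ℕ → ℕ //
      (IsDescentChain (N + 1) S b ∧ ∑ j ∈ range (N + 1), b j = n) ∧ ¬ b N = 0} ≃
    {c : ℕ → ℕ // IsDescentChain (N + 1) (S.erase (N + 1)) c ∧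
      ∑ j ∈ range (N + 1), c j + (N + 1) = n} where
  toFun b := ⟨fun j => b.1 j - 1, b.2.1.1.lower b.2.2, by
    refine Eq.trans (sum_range_sub_one_add fun j hj => ?_) b.2.1.2
    exact le_trans (Nat.one_le_iff_ne_zero.2 b.2.2) (b.2.1.1.1 (Nat.lt_succ_iff.1 hj))⟩
  invFun c := ⟨fun j => if j ≤ N then c.1 j + 1 else 0,
    ⟨c.2.1.raise, (sum_range_succ_ite_add_one N c.1).trans c.2.2⟩, by simp⟩
  left_inv b := by
    ext j
    dsimp only
    split_ifs with hj
    · have := b.2.1.1.1 hj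
      have := b.2.2
      omega
    · exact (b.2.1.1.eq_zero (by omega)).symm
  right_inv c := by
    ext j
    dsimp only
    split_ifs with hj
    · omega
    · exact (c.2.1.eq_zero (by omega)).symm

lemma count_succ (N : ℕ) (S : Finset ℕ) (n : ℕ) :
    count (N + 1) S n =
      count N S n + if N + 1 ≤ n then count (N + 1) (S.erase (N + 1)) (n - (N + 1)) else 0 := by
  rw [count, Nat.card_subtype_eq_card_and_add_card_and_not _ (fun b => b N = 0),
    Nat.card_congr (lowerEquiv N S n)]
  congr 1
  · refine Nat.card_congr (Equiv.subtypeEquivRight fun b => ?_)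
    rw [← isDescentChain_succ_and_eq_zero_iff (N := N), sum_range_succ]
    constructor
    · rintro ⟨⟨hb, hsum⟩, hN⟩
      exact ⟨⟨hb, hN⟩, by rw [← hsum, hN, add_zero]⟩
    · rintro ⟨⟨hb, hN⟩, hsum⟩
      exact ⟨⟨hb, by rw [hN, add_zero, hsum]⟩, hN⟩
  · split_ifs with hn
    · exact Nat.card_congr (Equiv.subtypeEquivRight fun c => and_congr_right fun _ => by omega)
    · have : IsEmpty {c : ℕ → ℕ // IsDescentChain (N + 1) (S.erase (N + 1)) c ∧
          ∑ j ∈ range (N + 1), c j + (N + 1) = n} := ⟨fun c => hn (by omega)⟩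
      exact Nat.card_of_isEmpty

lemma count_zero_empty (n : ℕ) : count 0 ∅ n = if n = 0 then 1 else 0 := by
  split_ifs with hn
  · subst hn
    refine Nat.card_eq_one_iff_unique.2
      ⟨⟨fun b c => ?_⟩, ⟨⟨0, ⟨antitone_const, by simp, rfl⟩, rfl⟩⟩⟩
    ext j
    rw [b.2.1.eq_zero j.zero_le, c.2.1.eq_zero j.zero_le]
  · have : IsEmpty {b : ℕ → ℕ // IsDescentChain 0 ∅ b ∧ ∑ j ∈ range 0, b j = n} :=
      ⟨fun b => hn (by simpa using b.2.2.symm)⟩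
    exact Nat.card_of_isEmpty

lemma count_eq_zero_of_mem {s : ℕ} (hs : s ∈ S) (hNs : N < s) (n : ℕ) : count N S n = 0 := by
  have : IsEmpty {b : ℕ → ℕ // IsDescentChain N S b ∧ ∑ j ∈ range N, b j = n} :=
    ⟨fun b => b.2.1.notMem_of_lt hNs hs⟩
  exact Nat.card_of_isEmpty

open PowerSeries

noncomputable def genFun (N : ℕ) (S : Finset ℕ) : ℤ⟦X⟧ :=
  PowerSeries.mk fun n => (count N S n : ℤ)

lemma genFun_succ (N : ℕ) (S : Finset ℕ) :
    genFun (N + 1) S = genFun N S + X ^ (N + 1) * genFun (N + 1) (S.erase (N + 1)) := by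
  ext n
  rw [map_add, coeff_X_pow_mul', genFun, genFun, genFun, coeff_mk, coeff_mk, count_succ]
  split_ifs <;> simp

theorem genFun_mul_prod {N : ℕ} {S : Finset ℕ} (hS : S ⊆ Icc 1 N) :
    genFun N S * ∏ i ∈ Icc 1 N, (1 - X ^ i) = X ^ (∑ s ∈ S, s) := by
  induction N generalizing S with
  | zero =>
    obtain rfl : S = ∅ := subset_empty.1 (by simpa using hS)
    ext n
    simp [genFun, count_zero_empty, coeff_one]
  | succ N ih =>
    have h_not_mem : ∀ T ⊆ Icc 1 (N + 1), N + 1 ∉ T →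
        genFun (N + 1) T * ∏ i ∈ Icc 1 (N + 1), (1 - X ^ i) = X ^ (∑ s ∈ T, s) := by
      intro T hT hN
      have hT' : T ⊆ Icc 1 N := fun t ht => by
        have := mem_Icc.1 (hT ht)
        exact mem_Icc.2
          ⟨this.1, Nat.le_of_lt_succ (this.2.lt_of_ne (ne_of_mem_of_not_mem ht hN))⟩
      have hrec := genFun_succ N T
      rw [erase_eq_of_notMem hN] at hrec
      rw [prod_Icc_succ_top (by omega), ← ih hT', mul_comm _ (1 - X ^ (N + 1)), ← mul_assoc]
      congr 1
      linear_combination hrec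
    by_cases hN : N + 1 ∈ S
    · have hrec := genFun_succ N S
      have hzero : genFun N S = 0 := by
        ext n; simp [genFun, count_eq_zero_of_mem hN (Nat.lt_succ_self N)]
      rw [hrec, hzero, zero_add, mul_assoc,
        h_not_mem _ ((erase_subset _ _).trans hS) (notMem_erase _ _),
        ← pow_add, add_sum_erase S (fun s => s) hN]
    · exact h_not_mem S hS hN

end DescentChain

namespace Diamond

open DescentChain

/-- For `i ∈ J`, exchange the two middle entries `3 i - 2` and `3 i - 1` (0-indexed) of the
`i`-th cell. -/
def cellSwap (J : Finset ℕ) (j : ℕ) : ℕ :=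
  if j % 3 = 1 ∧ j / 3 + 1 ∈ J then j + 1
  else if j % 3 = 2 ∧ j / 3 + 1 ∈ J then j - 1 else j

variable {J : Finset ℕ}

lemma cellSwap_of_mod_three_eq_zero {j : ℕ} (h : j % 3 = 0) : cellSwap J j = j := by
  simp [cellSwap, h]

lemma cellSwap_three_mul_add_one (i : ℕ) :
    cellSwap J (3 * i + 1) = if i + 1 ∈ J then 3 * i + 2 else 3 * i + 1 := by
  simp [cellSwap, show (3 * i + 1) / 3 = i by omega, show (3 * i + 1) % 3 = 1 by omega]

lemma cellSwap_three_mul_add_two (i : ℕ) :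
    cellSwap J (3 * i + 2) = if i + 1 ∈ J then 3 * i + 1 else 3 * i + 2 := by
  simp [cellSwap, show (3 * i + 2) / 3 = i by omega, show (3 * i + 2) % 3 = 2 by omega]

lemma cellSwap_involutive (J : Finset ℕ) : Function.Involutive (cellSwap J) := by
  intro j
  obtain ⟨i, rfl | rfl | rfl⟩ : ∃ i, j = 3 * i ∨ j = 3 * i + 1 ∨ j = 3 * i + 2 :=
    ⟨j / 3, by omega⟩
  · have h : cellSwap J (3 * i) = 3 * i := cellSwap_of_mod_three_eq_zero (by omega)
    rw [h, h]
  · rw [cellSwap_three_mul_add_one]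
    split_ifs <;> simp [cellSwap_three_mul_add_one, cellSwap_three_mul_add_two, *]
  · rw [cellSwap_three_mul_add_two]
    split_ifs <;> simp [cellSwap_three_mul_add_one, cellSwap_three_mul_add_two, *]

lemma cellSwap_lt_iff {j m : ℕ} : cellSwap J j < 3 * m + 1 ↔ j < 3 * m + 1 := by
  unfold cellSwap
  split_ifs <;> omega

lemma sum_range_comp_cellSwap {M : Type*} [AddCommMonoid M] (m : ℕ) (f : ℕ → M) :
    ∑ j ∈ range (3 * m + 1), f (cellSwap J j) = ∑ j ∈ range (3 * m + 1), f j :=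
  sum_nbij' (cellSwap J) (cellSwap J)
    (fun _ hj => mem_range.2 (cellSwap_lt_iff.2 (mem_range.1 hj)))
    (fun _ hj => mem_range.2 (cellSwap_lt_iff.2 (mem_range.1 hj)))
    (fun j _ => cellSwap_involutive J j) (fun j _ => cellSwap_involutive J j) (fun _ _ => rfl)

def zeroExtend {m : ℕ} (a : Fin m → ℕ) (j : ℕ) : ℕ :=
  if h : j < m then a ⟨j, h⟩ else 0

lemma zeroExtend_of_lt {m j : ℕ} (a : Fin m → ℕ) (h : j < m) :
    zeroExtend a j = a ⟨j, h⟩ :=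
  dif_pos h

lemma zeroExtend_of_le {m j : ℕ} (a : Fin m → ℕ) (h : m ≤ j) : zeroExtend a j = 0 :=
  dif_neg (by omega)

lemma sum_range_zeroExtend {m : ℕ} (a : Fin m → ℕ) :
    ∑ j ∈ range m, zeroExtend a j = ∑ p, a p := by
  rw [← Fin.sum_univ_eq_sum_range]
  exact sum_congr rfl fun p _ => zeroExtend_of_lt a p.isLt

variable {k : ℕ}

def riseSet (a : Fin (3 * k + 1) → ℕ) : Finset ℕ :=
  (Icc 1 k).filter fun i => zeroExtend a (3 * i - 2) < zeroExtend a (3 * i - 1)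

def descentSet (J : Finset ℕ) : Finset ℕ := J.image fun i => 3 * i - 1

lemma descentSet_subset (hJ : J ⊆ Icc 1 k) : descentSet J ⊆ Icc 1 (3 * k + 1) := by
  intro s hs
  obtain ⟨i, hi, rfl⟩ := mem_image.1 hs
  have := mem_Icc.1 (hJ hi)
  exact mem_Icc.2 ⟨by omega, by omega⟩

lemma sum_descentSet (J : Finset ℕ) : ∑ s ∈ descentSet J, s = ∑ i ∈ J, (3 * i - 1) :=
  sum_image fun i _ j _ h => by omega

lemma succ_mem_riseSet_iff (a : Fin (3 * k + 1) → ℕ) (i : ℕ) :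
    i + 1 ∈ riseSet a ↔ zeroExtend a (3 * i + 1) < zeroExtend a (3 * i + 2) := by
  rw [riseSet, mem_filter, mem_Icc, show 3 * (i + 1) - 2 = 3 * i + 1 by omega,
    show 3 * (i + 1) - 1 = 3 * i + 2 by omega]
  by_cases hi : i < k
  · simp [hi.nat_succ_le]
  · simp [hi, zeroExtend_of_le a (show 3 * k + 1 ≤ 3 * i + 1 by omega),
      zeroExtend_of_le a (show 3 * k + 1 ≤ 3 * i + 2 by omega)]

lemma zeroExtend_cell_of_isDiamond {a : Fin (3 * k + 1) → ℕ} (ha : IsDiamond k a) (i : ℕ) :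
    zeroExtend a (3 * i + 1) ≤ zeroExtend a (3 * i) ∧
      zeroExtend a (3 * i + 2) ≤ zeroExtend a (3 * i) ∧
      zeroExtend a (3 * i + 3) ≤ zeroExtend a (3 * i + 1) ∧
      zeroExtend a (3 * i + 3) ≤ zeroExtend a (3 * i + 2) := by
  by_cases hi : i < k
  · rw [zeroExtend_of_lt a (show 3 * i + 3 < 3 * k + 1 by omega),
      zeroExtend_of_lt a (show 3 * i + 2 < 3 * k + 1 by omega),
      zeroExtend_of_lt a (show 3 * i + 1 < 3 * k + 1 by omega),
      zeroExtend_of_lt a (show 3 * i < 3 * k + 1 by omega)]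
    exact ha i hi
  · simp [zeroExtend_of_le a (show 3 * k + 1 ≤ 3 * i + 1 by omega),
      zeroExtend_of_le a (show 3 * k + 1 ≤ 3 * i + 2 by omega),
      zeroExtend_of_le a (show 3 * k + 1 ≤ 3 * i + 3 by omega)]

lemma isDescentChain_of_isDiamond {a : Fin (3 * k + 1) → ℕ} (ha : IsDiamond k a) :
    IsDescentChain (3 * k + 1) (descentSet (riseSet a))
      (fun j => zeroExtend a (cellSwap (riseSet a) j)) := by
  refine ⟨antitone_nat_of_succ_le fun j => ?_, fun s hs => ?_, ?_⟩
  · obtain ⟨i, rfl | rfl | rfl⟩ : ∃ i, j = 3 * i ∨ j = 3 * i + 1 ∨ j = 3 * i + 2 :=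
      ⟨j / 3, by omega⟩
    all_goals
      simp only [show 3 * i + 1 + 1 = 3 * i + 2 by omega, show 3 * i + 2 + 1 = 3 * i + 3 by omega,
        cellSwap_three_mul_add_one, cellSwap_three_mul_add_two,
        cellSwap_of_mod_three_eq_zero (show 3 * i % 3 = 0 by omega),
        cellSwap_of_mod_three_eq_zero (show (3 * i + 3) % 3 = 0 by omega), succ_mem_riseSet_iff]
      have := zeroExtend_cell_of_isDiamond ha i
      split_ifs <;> omega
  · obtain ⟨i, hi, rfl⟩ := mem_image.1 hs
    obtain ⟨i, rfl⟩ : ∃ i', i = i' + 1 :=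
      ⟨i - 1, by have := (mem_Icc.1 (filter_subset _ _ hi)).1; omega⟩
    dsimp only
    rw [show 3 * (i + 1) - 1 = 3 * i + 2 by omega, show 3 * i + 2 - 1 = 3 * i + 1 by omega,
      cellSwap_three_mul_add_one, cellSwap_three_mul_add_two, if_pos hi, if_pos hi]
    exact (succ_mem_riseSet_iff a i).1 hi
  · exact zeroExtend_of_le a (not_lt.1 fun h => (cellSwap_lt_iff.1 h).false)

lemma isDiamond_comp_cellSwap {b : ℕ → ℕ} (hb : Antitone b) (J : Finset ℕ) :
    IsDiamond k (fun p => b (cellSwap J p)) := by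
  intro i _
  have h1 := cellSwap_three_mul_add_one (J := J) i
  have h2 := cellSwap_three_mul_add_two (J := J) i
  simp only [cellSwap_of_mod_three_eq_zero (show 3 * i % 3 = 0 by omega),
    cellSwap_of_mod_three_eq_zero (show (3 * i + 3) % 3 = 0 by omega)]
  refine ⟨hb ?_, hb ?_, hb ?_, hb ?_⟩ <;> split_ifs at h1 h2 <;> omega

lemma zeroExtend_comp_cellSwap {S : Finset ℕ} {b : ℕ → ℕ}
    (hb : IsDescentChain (3 * k + 1) S b) (j : ℕ) :
    zeroExtend (fun p : Fin (3 * k + 1) => b (cellSwap J p)) j = b (cellSwap J j) := by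
  by_cases hj : j < 3 * k + 1
  · exact zeroExtend_of_lt _ hj
  · rw [zeroExtend_of_le _ (not_lt.1 hj), hb.eq_zero (not_lt.1 (hj ∘ cellSwap_lt_iff.1))]

lemma riseSet_comp_cellSwap {b : ℕ → ℕ} (hJ : J ⊆ Icc 1 k)
    (hb : IsDescentChain (3 * k + 1) (descentSet J) b) :
    riseSet (fun p : Fin (3 * k + 1) => b (cellSwap J p)) = J := by
  ext i
  obtain rfl | ⟨i, rfl⟩ : i = 0 ∨ ∃ i', i = i' + 1 := by cases i <;> simp
  · simp only [riseSet, mem_filter, mem_Icc]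
    exact iff_of_false (by omega) fun h => by have := mem_Icc.1 (hJ h); omega
  rw [succ_mem_riseSet_iff, zeroExtend_comp_cellSwap hb, zeroExtend_comp_cellSwap hb,
    cellSwap_three_mul_add_one, cellSwap_three_mul_add_two]
  split_ifs with hi
  · have := hb.2.1 (3 * (i + 1) - 1) (mem_image_of_mem _ hi)
    rw [show 3 * (i + 1) - 1 = 3 * i + 2 by omega] at this
    simpa [hi] using this
  · simpa [hi] using hb.1 (show 3 * i + 1 ≤ 3 * i + 2 by omega)

def diamondEquiv (k n : ℕ) :
    {a : Fin (3 * k + 1) → ℕ // IsDiamond k a ∧ ∑ i, a i = n} ≃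
      Σ J : (Icc 1 k).powerset, {b : ℕ → ℕ //
        IsDescentChain (3 * k + 1) (descentSet J) b ∧ ∑ j ∈ range (3 * k + 1), b j = n} where
  toFun a := ⟨⟨riseSet a.1, mem_powerset.2 (filter_subset _ _)⟩,
    fun j => zeroExtend a.1 (cellSwap (riseSet a.1) j), isDescentChain_of_isDiamond a.2.1, by
      rw [sum_range_comp_cellSwap k (zeroExtend a.1), sum_range_zeroExtend, a.2.2]⟩
  invFun b := ⟨fun p => b.2.1 (cellSwap b.1 p), isDiamond_comp_cellSwap b.2.2.1.1 _, by
    rw [Fin.sum_univ_eq_sum_range (fun j => b.2.1 (cellSwap b.1 j)), sum_range_comp_cellSwap,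
      b.2.2.2]⟩
  left_inv a := Subtype.ext <| funext fun p => by
    simp only [cellSwap_involutive _ _, zeroExtend_of_lt a.1 p.isLt]
  right_inv b := by
    have hJ := riseSet_comp_cellSwap (mem_powerset.1 b.1.2) b.2.2.1
    refine Sigma.subtype_ext (Subtype.ext hJ) (funext fun j => ?_)
    simp only [hJ, zeroExtend_comp_cellSwap b.2.2.1, cellSwap_involutive _ _]

theorem ppD_eq_sum (k n : ℕ) :
    ppD k n = ∑ J ∈ (Icc 1 k).powerset, count (3 * k + 1) (descentSet J) n := by
  rw [ppD, Nat.card_congr (diamondEquiv k n), Nat.card_sigma]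
  exact sum_coe_sort _ fun J => count (3 * k + 1) (descentSet J) n

end Diamond

open DescentChain Diamond

theorem stmt9_general (k : ℕ) :
    (PowerSeries.mk fun n => (ppD k n : ℤ)) *
        ∏ i ∈ Finset.Icc 1 (3 * k + 1), (1 - (PowerSeries.X : PowerSeries ℤ) ^ i)
      = ∏ i ∈ Finset.Icc 1 k, (1 + (PowerSeries.X : PowerSeries ℤ) ^ (3 * i - 1)) := by
  have hgen : (PowerSeries.mk fun n => (ppD k n : ℤ)) =
      ∑ J ∈ (Icc 1 k).powerset, genFun (3 * k + 1) (descentSet J) := by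
    ext n
    simp [ppD_eq_sum, genFun]
  rw [hgen, sum_mul, prod_one_add]
  refine sum_congr rfl fun J hJ => ?_
  rw [genFun_mul_prod (descentSet_subset (mem_powerset.1 hJ)), sum_descentSet,
    prod_pow_eq_pow_sum]

/-- the generating function identity
`(∑ D_k(n) qⁿ) · ∏_{i=1}^{3k+1} (1 − qⁱ) = ∏_{i=1}^{k} (1 + q^{3i−1})` in `ℤ[[q]]`. -/
theorem stmt9 (k : ℕ) (hk : 1 ≤ k) :
    (PowerSeries.mk fun n => (ppD k n : ℤ)) *
        ∏ i ∈ Finset.Icc 1 (3 * k + 1), (1 - (PowerSeries.X : PowerSeries ℤ) ^ i)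
      = ∏ i ∈ Finset.Icc 1 k, (1 + (PowerSeries.X : PowerSeries ℤ) ^ (3 * i - 1)) :=
  stmt9_general k
end

section
/- Let a = (a_1,…,a_r) be a sequence of positive integers, r ≥ 1, and let D be a common multiple of a_1,…,a_r. Then for every nonnegative integer n, p_a(n) = (1/(r−1)!) · Σ_{m=0}^{r−1} Σ_{(j_1,…,j_r)} Σ_{k=m}^{r−1} c(r, k+1) · (−1)^{k−m} · binom(k, m) · D^{−k} · (a_1 j_1 + ⋯ + a_r j_r)^{k−m} · n^m, where the sum over (j_1,…,j_r) ranges over all tuples with 0 ≤ j_i ≤ D/a_i − 1 for 1 ≤ i ≤ r and a_1 j_1 + ⋯ + a_r j_r ≡ n (mod D). -/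
/-!
Write each `x i` as `t i + (D / a i) * y i` with `t i < D / a i`. The equation
`∑ a i * x i = n` becomes `S + D * ∑ y i = n` with `S = ∑ a i * t i`, so a residue tuple `t`
with `S ≡ n (mod D)` and `S ≤ n` contributes `C(q + r - 1, r - 1)` solutions, `q = (n - S) / D`,
and this is `(q + 1) ⋯ (q + r - 1) / (r - 1)!`. Because `S < r * D`, a tuple with `S > n` has
`(n - S) / D ∈ {-1, …, -(r - 1)}`, where the same product vanishes; so each tuple contributes that
polynomial at `(n - S) / D`, and expanding it with Stirling numbers of the first kind and the
binomial theorem gives the formula.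
-/

open Finset

theorem stirling1_eq_zero_of_lt : ∀ {n m : ℕ}, n < m → stirling1 n m = 0
  | 0, _ + 1, _ => rfl
  | n + 1, m + 1, h => by
    rw [stirling1, stirling1_eq_zero_of_lt (by omega), stirling1_eq_zero_of_lt (by omega),
      Nat.mul_zero]

theorem prod_range_add_one_eq_sum_stirling1 {R : Type*} [CommSemiring R] (p : ℕ) (x : R) :
    ∏ j ∈ range p, (x + j + 1) =
      ∑ l ∈ range (p + 1), (stirling1 (p + 1) (l + 1) : R) * x ^ l := by
  induction p with
  | zero => simp [stirling1]
  | succ p ih =>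
    have shift : ∑ l ∈ range (p + 2), (stirling1 (p + 1) l : R) * x ^ l
        = x * ∑ l ∈ range (p + 1), (stirling1 (p + 1) (l + 1) : R) * x ^ l := by
      rw [sum_range_succ', mul_sum]
      simp only [stirling1, Nat.cast_zero, zero_mul, add_zero, pow_succ]
      exact sum_congr rfl fun l _ => by ring
    have trunc : ∑ l ∈ range (p + 2), (stirling1 (p + 1) (l + 1) : R) * x ^ l
        = ∑ l ∈ range (p + 1), (stirling1 (p + 1) (l + 1) : R) * x ^ l := by
      rw [sum_range_succ, stirling1_eq_zero_of_lt (by omega : p + 1 < p + 1 + 1), Nat.cast_zero,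
        zero_mul, add_zero]
    calc ∏ j ∈ range (p + 1), (x + j + 1)
        = (x + (p + 1)) * ∑ l ∈ range (p + 1), (stirling1 (p + 1) (l + 1) : R) * x ^ l := by
          rw [prod_range_succ, ih, mul_comm]; ring
      _ = ∑ l ∈ range (p + 2),
            ((stirling1 (p + 1) l : R) + (p + 1) * stirling1 (p + 1) (l + 1)) * x ^ l := by
          simp only [add_mul, sum_add_distrib, shift, mul_assoc, ← mul_sum, trunc]
      _ = _ := by
          refine sum_congr rfl fun l _ => ?_
          simp only [stirling1]; push_cast; ring

theorem sum_stirling1_binomial_eq_prod {K : Type*} [Field K] (p : ℕ) (D S n : K) :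
    ∑ m ∈ range (p + 1), ∑ l ∈ Icc m p,
        (stirling1 (p + 1) (l + 1) : K) * (-1) ^ (l - m) * (l.choose m : K) *
          D ^ (-(l : ℤ)) * S ^ (l - m) * n ^ m
      = ∏ j ∈ range p, ((n - S) / D + j + 1) := by
  rw [prod_range_add_one_eq_sum_stirling1,
    sum_comm' (t' := range (p + 1)) (s' := fun l => range (l + 1)) (by intro m l; simp; omega)]
  refine sum_congr rfl fun l _ => ?_
  rw [div_pow, sub_eq_add_neg, add_pow, div_eq_inv_mul, zpow_neg, zpow_natCast, mul_sum, mul_sum]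
  refine sum_congr rfl fun m _ => ?_
  rw [neg_pow]
  ring

open Fintype

section Counting

variable {ι : Type*} [Fintype ι]

theorem finite_sum_mul_eq {a : ι → ℕ} (ha : ∀ i, 0 < a i) (n : ℕ) :
    Finite {x : ι → ℕ // ∑ i, a i * x i = n} := by
  refine Set.Finite.to_subtype <|
    (Set.Finite.pi fun _ => Set.finite_Iic n).subset fun x hx i _ => ?_
  calc x i ≤ a i * x i := Nat.le_mul_of_pos_left _ (ha i)
    _ ≤ ∑ j, a j * x j := single_le_sum (f := fun j => a j * x j) (by simp) (mem_univ i)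
    _ = n := hx

theorem natCard_add_mul_sum_eq_of_lt {S D n : ℕ} (h : n < S) :
    Nat.card {y : ι → ℕ // S + D * ∑ i, y i = n} = 0 :=
  have : IsEmpty {y : ι → ℕ // S + D * ∑ i, y i = n} := ⟨fun ⟨_, hy⟩ => by omega⟩
  Nat.card_of_isEmpty

variable [DecidableEq ι]

theorem natCard_sum_eq (q : ℕ) :
    Nat.card {y : ι → ℕ // ∑ i, y i = q} = (card ι + q - 1).choose q := by
  rw [← Nat.card_congr (Sym.equivNatSumOfFintype ι q), Sym.natCard_sym_eq_choose,
    Nat.card_eq_fintype_card]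

def divModEquiv (b : ι → ℕ) (hb : ∀ i, 0 < b i) :
    (ι → ℕ) ≃ (piFinset fun i => range (b i)) × (ι → ℕ) where
  toFun x := (⟨fun i => x i % b i, by simp [Nat.mod_lt _ (hb _)]⟩, fun i => x i / b i)
  invFun z i := z.1.1 i + b i * z.2 i
  left_inv x := funext fun i => Nat.mod_add_div _ _
  right_inv z := by
    obtain ⟨⟨t, ht⟩, y⟩ := z
    have htb : ∀ i, t i < b i := by simpa using ht
    ext i
    · simp [Nat.mod_eq_of_lt (htb i)]
    · simp [Nat.add_mul_div_left _ _ (hb i), Nat.div_eq_of_lt (htb i)]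

theorem natCard_eq_sum_natCard_residue (b : ι → ℕ) (hb : ∀ i, 0 < b i)
    (P : (ι → ℕ) → Prop) [Finite {x // P x}] :
    Nat.card {x // P x} = ∑ t ∈ piFinset fun i => range (b i),
      Nat.card {y : ι → ℕ // P fun i => t i + b i * y i} := by
  let F (t : piFinset fun i => range (b i)) := {y : ι → ℕ // P fun i => t.1 i + b i * y i}
  let e : {x // P x} ≃ Σ t, F t :=
    ((divModEquiv b hb).subtypeEquiv fun x =>
        Iff.of_eq (congrArg P ((divModEquiv b hb).symm_apply_apply x).symm)).trans
      (Equiv.subtypeProdEquivSigmaSubtype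
        fun (t : piFinset fun i => range (b i)) (y : ι → ℕ) => P fun i => t.1 i + b i * y i)
  have := Finite.of_equiv _ e
  have : ∀ t, Finite (F t) := fun t => Finite.of_injective (Sigma.mk t) sigma_mk_injective
  rw [Nat.card_congr e, Nat.card_sigma]
  exact sum_coe_sort _ fun t : ι → ℕ => Nat.card {y : ι → ℕ // P fun i => t i + b i * y i}

theorem natCard_add_mul_sum_eq {S D : ℕ} (hD : 0 < D) (q : ℕ) :
    Nat.card {y : ι → ℕ // S + D * ∑ i, y i = S + D * q} = (card ι + q - 1).choose q := by
  rw [← natCard_sum_eq]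
  exact Nat.card_congr (Equiv.subtypeEquivRight fun y => by simp [hD.ne'])

theorem natCard_sum_mul_eq_sum_residue {a : ι → ℕ} {D : ℕ} (hD0 : 0 < D) (hD : ∀ i, a i ∣ D)
    (n : ℕ) :
    Nat.card {x : ι → ℕ // ∑ i, a i * x i = n} =
      ∑ t ∈ (piFinset fun i => range (D / a i)).filter (fun t => (∑ i, a i * t i) % D = n % D),
        Nat.card {y : ι → ℕ // ∑ i, a i * t i + D * ∑ i, y i = n} := by
  have ha (i) : 0 < a i := Nat.pos_of_dvd_of_pos (hD i) hD0
  have := finite_sum_mul_eq ha n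
  rw [natCard_eq_sum_natCard_residue _ fun i => Nat.div_pos (Nat.le_of_dvd hD0 (hD i)) (ha i),
    sum_filter_of_ne]
  · refine sum_congr rfl fun t _ => Nat.card_congr (Equiv.subtypeEquivRight fun y => ?_)
    simp only [mul_add, ← mul_assoc, Nat.mul_div_cancel' (hD _), sum_add_distrib, mul_sum]
  · intro t _ hne
    obtain ⟨y, hy⟩ := (Nat.card_ne_zero.mp hne).1
    rw [← hy, Nat.add_mul_mod_self_left]

theorem sum_mul_lt_card_mul [Nonempty ι] {a : ι → ℕ} {D : ℕ} (hD : ∀ i, a i ∣ D)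
    {t : ι → ℕ} (ht : t ∈ piFinset fun i => range (D / a i)) :
    ∑ i, a i * t i < card ι * D := by
  calc ∑ i, a i * t i < ∑ _i : ι, D := sum_lt_sum_of_nonempty univ_nonempty fun i _ => by
        rw [← Nat.lt_div_iff_mul_lt' (hD i)]
        exact mem_range.mp (mem_piFinset.mp ht i)
    _ = card ι * D := by simp

end Counting

theorem factorial_mul_natCard_eq_prod {K : Type*} [Field K] [CharZero K] {p S D n : ℕ}
    (hD0 : 0 < D) (hSn : S ≡ n [MOD D]) (hS : S < (p + 1) * D) :
    (p.factorial : K) * Nat.card {y : Fin (p + 1) → ℕ // S + D * ∑ i, y i = n}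
      = ∏ j ∈ range p, (((n : K) - S) / D + j + 1) := by
  have hD : (D : K) ≠ 0 := Nat.cast_ne_zero.mpr hD0.ne'
  rcases le_or_gt S n with h | h
  · obtain ⟨q, hq⟩ := (Nat.modEq_iff_dvd' h).mp hSn
    obtain rfl : n = S + D * q := by omega
    have hx : (((S + D * q : ℕ) : K) - S) / D = q := by push_cast; field_simp; ring
    rw [natCard_add_mul_sum_eq hD0, Fintype.card_fin, hx, show p + 1 + q - 1 = q + p by omega,
      Nat.choose_symm_add, ← Nat.cast_mul, ← Nat.ascFactorial_eq_factorial_mul_choose,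
      Nat.ascFactorial_eq_prod_range]
    push_cast
    exact prod_congr rfl fun j _ => by ring
  · -- `S < (p + 1) * D` puts `(n - S) / D` among `-1, …, -p`, a root of the product.
    obtain ⟨k, hk⟩ := (Nat.modEq_iff_dvd' h.le).mp hSn.symm
    have hk1 : 1 ≤ k := Nat.pos_of_ne_zero (by rintro rfl; omega)
    have hkp : k - 1 < p := by
      by_contra! hpk
      have := Nat.mul_le_mul_left D (show p + 1 ≤ k by omega)
      rw [mul_comm] at hS
      omega
    rw [natCard_add_mul_sum_eq_of_lt h, Nat.cast_zero, mul_zero,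
      prod_eq_zero (mem_range.mpr hkp)]
    obtain rfl : S = n + D * k := by omega
    push_cast [hk1]
    field_simp
    ring

theorem stmt12_general (r : ℕ) (hr : 1 ≤ r) (a : Fin r → ℕ)
    (D : ℕ) (hD0 : 0 < D) (hD : ∀ i, a i ∣ D) (n : ℕ) :
    (rp a n : ℚ) = (1 / (Nat.factorial (r - 1) : ℚ)) *
      ∑ m ∈ Finset.range r,
      ∑ t ∈ (Fintype.piFinset fun i => Finset.range (D / a i)).filter
          (fun t => (∑ i, a i * t i) % D = n % D),
      ∑ l ∈ Finset.Icc m (r - 1),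
        (stirling1 r (l + 1) : ℚ) * (-1 : ℚ) ^ (l - m) * (l.choose m : ℚ) *
          (D : ℚ) ^ (-(l : ℤ)) * ((∑ i, a i * t i : ℕ) : ℚ) ^ (l - m) * (n : ℚ) ^ m := by
  obtain ⟨p, rfl⟩ := Nat.exists_eq_add_of_le' hr
  rw [Nat.add_sub_cancel, rp, natCard_sum_mul_eq_sum_residue hD0 hD, Nat.cast_sum, sum_comm,
    mul_sum]
  refine sum_congr rfl fun t ht => ?_
  obtain ⟨htD, hSn⟩ := mem_filter.mp ht
  have hS := sum_mul_lt_card_mul hD htD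
  rw [Fintype.card_fin] at hS
  rw [sum_stirling1_binomial_eq_prod, ← factorial_mul_natCard_eq_prod hD0 hSn hS]
  field_simp

/-- the explicit quasi-polynomial formula for the restricted partition
function `p_a(n)` in terms of unsigned Stirling numbers of the first kind. -/
theorem stmt12 (r : ℕ) (hr : 1 ≤ r) (a : Fin r → ℕ) (ha : ∀ i, 0 < a i)
    (D : ℕ) (hD0 : 0 < D) (hD : ∀ i, a i ∣ D) (n : ℕ) :
    (rp a n : ℚ) = (1 / (Nat.factorial (r - 1) : ℚ)) *
      ∑ m ∈ Finset.range r,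
      ∑ t ∈ (Fintype.piFinset fun i => Finset.range (D / a i)).filter
          (fun t => (∑ i, a i * t i) % D = n % D),
      ∑ l ∈ Finset.Icc m (r - 1),
        (stirling1 r (l + 1) : ℚ) * (-1 : ℚ) ^ (l - m) * (l.choose m : ℚ) *
          (D : ℚ) ^ (-(l : ℤ)) * ((∑ i, a i * t i : ℕ) : ℚ) ^ (l - m) * (n : ℚ) ^ m :=
  stmt12_general r hr a D hD0 hD n
end

section
/- Let a = (a_1,…,a_r) be a sequence of positive integers, r ≥ 1, and let D be a common multiple of a_1,…,a_r. Then for every nonnegative integer n, p_a(n) = (1/(r−1)!) · Σ_{(j_1,…,j_r)} ∏_{ℓ=1}^{r−1} ( (n − a_1 j_1 − ⋯ − a_r j_r)/D + ℓ ), where the sum ranges over all tuples (j_1,…,j_r) with 0 ≤ j_i ≤ D/a_i − 1 for 1 ≤ i ≤ r and a_1 j_1 + ⋯ + a_r j_r ≡ n (mod D). -/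
/-!
Write each `x i` as `t i + (D / a i) * q i` with `t i < D / a i`. Then
`∑ a i * x i = ∑ a i * t i + D * ∑ q i`, so the solutions of `∑ a i * x i = n` with a given
remainder vector `t` correspond to the `q` with `∑ q i = (n - ∑ a i * t i) / D`, and these are
counted by `multichoose r m = (m + 1) ⋯ (m + r - 1) / (r - 1)!`. The remainder vectors with
`∑ a i * t i > n` but `∑ a i * t i ≡ n (mod D)` contribute nothing to the formula, because
`∑ a i * t i < r D` makes `(n - ∑ a i * t i) / D` one of `-1, …, -(r - 1)`, a root of the
product.
-/

open Finset

open scoped Nat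

theorem cast_multichoose_eq_prod_div {K : Type*} [Field K] [CharZero K] (k m : ℕ) :
    ((k + 1).multichoose m : K) = (∏ l ∈ Icc 1 k, ((m : K) + l)) / k ! := by
  have hprod : ∏ l ∈ Icc 1 k, ((m : K) + l) = ((m + 1).ascFactorial k : ℕ) := by
    rw [Nat.ascFactorial_eq_prod_range, range_eq_Ico, ← Ico_add_one_right_eq_Icc,
      ← prod_Ico_add' _ 0 k 1]
    push_cast
    exact prod_congr rfl fun _ _ => by ring
  rw [hprod, Nat.ascFactorial_eq_factorial_mul_choose, Nat.multichoose_eq,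
    add_right_comm, add_tsub_cancel_right, add_comm k m, Nat.choose_symm_add, Nat.cast_mul,
    mul_div_cancel_left₀ _ (Nat.cast_ne_zero.2 k.factorial_ne_zero)]

section

variable {ι : Type*} [Fintype ι]

theorem natCard_sum_eq_multichoose (m : ℕ) :
    Nat.card {q : ι → ℕ // ∑ i, q i = m} = (Fintype.card ι).multichoose m := by
  classical
  rw [← Nat.card_congr (Sym.equivNatSumOfFintype ι m), Sym.natCard_sym_eq_multichoose,
    Nat.card_eq_fintype_card]

theorem finite_add_mul_sum_eq (c D n : ℕ) (hD : 0 < D) :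
    Finite {q : ι → ℕ // c + D * ∑ i, q i = n} := by
  refine Finite.of_injective (β := ι → Fin (n + 1))
    (fun q i => ⟨q.1 i, Nat.lt_succ_of_le ?_⟩) fun q q' h => ?_
  · calc q.1 i ≤ ∑ j, q.1 j := single_le_sum (fun _ _ => Nat.zero_le _) (mem_univ i)
      _ ≤ D * ∑ j, q.1 j := Nat.le_mul_of_pos_left _ hD
      _ ≤ n := le_of_le_of_eq (Nat.le_add_left _ _) q.2
  · exact Subtype.ext (funext fun i => congrArg Fin.val (congrFun h i))

theorem natCard_add_mul_sum_eq_s13 (c D n : ℕ) (hD : 0 < D) :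
    Nat.card {q : ι → ℕ // c + D * ∑ i, q i = n} =
      if c ≤ n ∧ D ∣ n - c then (Fintype.card ι).multichoose ((n - c) / D) else 0 := by
  split_ifs with h
  · obtain ⟨hle, m, hm⟩ := h
    rw [hm, Nat.mul_div_cancel_left _ hD, ← natCard_sum_eq_multichoose]
    refine Nat.card_congr (Equiv.subtypeEquivRight fun q => ?_)
    constructor
    · intro hq
      exact Nat.eq_of_mul_eq_mul_left hD (by omega)
    · rintro rfl
      omega
  · have : IsEmpty {q : ι → ℕ // c + D * ∑ i, q i = n} :=
      ⟨fun ⟨q, hq⟩ => h ⟨by omega, ∑ i, q i, by omega⟩⟩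
    exact Nat.card_of_isEmpty

variable [DecidableEq ι]

def piDivModEquiv (b : ι → ℕ) (hb : ∀ i, 0 < b i) :
    (ι → ℕ) ≃ (Fintype.piFinset fun i => range (b i)) × (ι → ℕ) where
  toFun x :=
    (⟨fun i => x i % b i, Fintype.mem_piFinset.2 fun i => mem_range.2 (Nat.mod_lt _ (hb i))⟩,
      fun i => x i / b i)
  invFun p i := p.1.1 i + b i * p.2 i
  left_inv x := funext fun i => Nat.mod_add_div _ _
  right_inv := by
    rintro ⟨⟨t, ht⟩, q⟩
    simp only [Fintype.mem_piFinset, mem_range] at ht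
    ext i
    · simp [Nat.add_mul_mod_self_left, Nat.mod_eq_of_lt (ht i)]
    · simp [Nat.add_mul_div_left _ _ (hb i), Nat.div_eq_of_lt (ht i)]

theorem natCard_sum_mul_eq_sum_multichoose (a : ι → ℕ) (ha : ∀ i, 0 < a i) (D : ℕ)
    (hD0 : 0 < D) (hD : ∀ i, a i ∣ D) (n : ℕ) :
    Nat.card {x : ι → ℕ // ∑ i, a i * x i = n} =
      ∑ t ∈ Fintype.piFinset (fun i => range (D / a i)),
        if ∑ i, a i * t i ≤ n ∧ D ∣ n - ∑ i, a i * t i then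
          (Fintype.card ι).multichoose ((n - ∑ i, a i * t i) / D) else 0 := by
  have hb i : 0 < D / a i := Nat.div_pos (Nat.le_of_dvd hD0 (hD i)) (ha i)
  have hsum (t q : ι → ℕ) :
      ∑ i, a i * (t i + D / a i * q i) = ∑ i, a i * t i + D * ∑ i, q i := by
    simp only [Nat.mul_add, ← Nat.mul_assoc, Nat.mul_div_cancel' (hD _), sum_add_distrib,
      mul_sum]
  have e : {x : ι → ℕ // ∑ i, a i * x i = n} ≃
      Σ t : Fintype.piFinset (fun i => range (D / a i)),
        {q : ι → ℕ // ∑ i, a i * t.1 i + D * ∑ i, q i = n} :=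
    (((piDivModEquiv _ hb).symm.subtypeEquiv fun p => by
      simp [piDivModEquiv, hsum]).symm).trans (Equiv.subtypeProdEquivSigmaSubtype _)
  have hfinite := fun t => finite_add_mul_sum_eq (ι := ι) t D n hD0
  rw [Nat.card_congr e, Nat.card_sigma]
  simp only [natCard_add_mul_sum_eq_s13 _ _ _ hD0]
  conv_rhs => rw [← sum_coe_sort]

theorem sum_mul_lt_of_mem_piFinset [Nonempty ι] (a : ι → ℕ) (D : ℕ) (hD : ∀ i, a i ∣ D)
    {t : ι → ℕ} (ht : t ∈ Fintype.piFinset fun i => range (D / a i)) :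
    ∑ i, a i * t i < Fintype.card ι * D :=
  calc ∑ i, a i * t i < ∑ _i : ι, D := sum_lt_sum_of_nonempty univ_nonempty fun i _ =>
        (Nat.lt_div_iff_mul_lt' (hD i) _).1 (mem_range.1 (Fintype.mem_piFinset.1 ht i))
    _ = Fintype.card ι * D := by rw [sum_const, card_univ, smul_eq_mul]

end

theorem cast_ite_multichoose_eq_ite_prod_div {K : Type*} [Field K] [CharZero K]
    (r D n S : ℕ) (hr : 1 ≤ r) (hD : 0 < D) (hS : S < n + r * D) :
    (((if S ≤ n ∧ D ∣ n - S then r.multichoose ((n - S) / D) else 0 : ℕ)) : K) =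
      if S % D = n % D then (∏ l ∈ Icc 1 (r - 1), (((n : K) - S) / D + l)) / (r - 1)!
      else 0 := by
  obtain ⟨k, rfl⟩ : ∃ k, r = k + 1 := ⟨r - 1, by omega⟩
  rw [Nat.add_sub_cancel]
  have hDK : (D : K) ≠ 0 := Nat.cast_ne_zero.2 hD.ne'
  by_cases hmod : S % D = n % D
  · rw [if_pos hmod]
    rcases le_or_gt S n with hle | hlt
    · have hdvd : D ∣ n - S := (Nat.modEq_iff_dvd' hle).1 hmod
      rw [if_pos ⟨hle, hdvd⟩, cast_multichoose_eq_prod_div, Nat.cast_div hdvd hDK,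
        Nat.cast_sub hle]
    · obtain ⟨j, hj⟩ := (Nat.modEq_iff_dvd' hlt.le).1 hmod.symm
      have hj1 : 1 ≤ j := Nat.pos_of_ne_zero fun h => by simp [h] at hj; omega
      have hjk : j ≤ k := by
        have : D * j < D * (k + 1) := by rw [← hj, mul_comm D]; omega
        exact Nat.le_of_lt_succ (Nat.lt_of_mul_lt_mul_left this)
      have hjK : ((n : K) - S) / D = -j := by
        rw [div_eq_iff hDK]
        have := congrArg (Nat.cast (R := K)) hj
        push_cast [Nat.cast_sub hlt.le] at this
        linear_combination -this
      rw [if_neg (by omega), Nat.cast_zero, hjK,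
        prod_eq_zero (mem_Icc.2 ⟨hj1, hjk⟩) (neg_add_cancel _), zero_div]
  · rw [if_neg hmod, if_neg fun h => hmod ((Nat.modEq_iff_dvd' h.1).2 h.2), Nat.cast_zero]

/-- the concise formula for the restricted partition function `p_a(n)`. -/
theorem stmt13 (r : ℕ) (hr : 1 ≤ r) (a : Fin r → ℕ) (ha : ∀ i, 0 < a i)
    (D : ℕ) (hD0 : 0 < D) (hD : ∀ i, a i ∣ D) (n : ℕ) :
    (rp a n : ℚ) = (1 / (Nat.factorial (r - 1) : ℚ)) *
      ∑ t ∈ (Fintype.piFinset fun i => Finset.range (D / a i)).filter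
          (fun t => (∑ i, a i * t i) % D = n % D),
        ∏ l ∈ Finset.Icc 1 (r - 1),
          (((n : ℚ) - ((∑ i, a i * t i : ℕ) : ℚ)) / (D : ℚ) + (l : ℚ)) := by
  have : Nonempty (Fin r) := ⟨⟨0, hr⟩⟩
  rw [rp, natCard_sum_mul_eq_sum_multichoose a ha D hD0 hD n, Fintype.card_fin, Nat.cast_sum,
    sum_filter, mul_sum]
  refine sum_congr rfl fun t ht => ?_
  have hS : ∑ i, a i * t i < n + r * D := by
    have := sum_mul_lt_of_mem_piFinset a D hD ht
    rw [Fintype.card_fin] at this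
    omega
  rw [cast_ite_multichoose_eq_ite_prod_div r D n _ hr hD0 hS, mul_ite, mul_zero, one_div_mul_eq_div]
end

section
/- Let a = (a_1,…,a_r) be a sequence of positive integers, r ≥ 1, and let D be a common multiple of a_1,…,a_r. Then for every integer n, (1/(D·(r−1)!)) · Σ_{0 ≤ j_1 ≤ D/a_1 − 1, …, 0 ≤ j_r ≤ D/a_r − 1} ∏_{ℓ=1}^{r−1} ( (n − a_1 j_1 − ⋯ − a_r j_r)/D + ℓ ) = (1/(a_1⋯a_r)) · Σ_{u=0}^{r−1} ((−1)^u/(r−1−u)!) · Σ_{i_1+⋯+i_r=u} (B_{i_1}⋯B_{i_r}/(i_1!⋯i_r!)) · a_1^{i_1}⋯a_r^{i_r} · n^{r−1−u} (both sides being the polynomial part of p_a(n)). -/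
open Finset

/-!
Write `T(X) = X / (1 - e^{-X})`. Summing the geometric series in each `j_i` and using
`T(cX) (1 - e^{-cX}) = cX` gives
`(∏ a_i) (∑_j e^{(n - a·j)X}) T(DX)^r = D^r e^{nX} ∏ T(a_i X)`.
The coefficient of `X^{r-1}` on the right is the Bernoulli sum. On the left, the summand of `j`
contributes `D^{r-1} [X^{r-1}] e^{zX} T(X)^r` with `z = (n - a·j)/D`, and this coefficient is
`(z+1)⋯(z+r-1)/(r-1)!`: applying `X d/dX` to `e^{(z+1)X} T^m` and using
`X T' = T - e^{-X} T^2` gives `m [X^m] e^{zX} T^{m+1} = (z+1) [X^{m-1}] e^{(z+1)X} T^m`.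
-/

theorem Finset.sum_finsuppAntidiag_univ {ι M : Type*} [Fintype ι] [DecidableEq ι]
    [AddCommMonoid M] (u : ℕ) (g : (ι → ℕ) → M) :
    ∑ l ∈ finsuppAntidiag univ u, g l =
      ∑ e ∈ (Fintype.piFinset fun _ : ι => range (u + 1)).filter (fun e => ∑ i, e i = u),
        g e := by
  have h : (Fintype.piFinset fun _ : ι => range (u + 1)).filter (fun e => ∑ i, e i = u) =
      piAntidiag univ u := by
    ext e
    simp only [mem_filter, Fintype.mem_piFinset, mem_range, mem_piAntidiag, mem_univ,
      implies_true, and_true, and_iff_right_iff_imp]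
    rintro rfl i
    exact Nat.lt_succ_of_le (single_le_sum (fun j _ => Nat.zero_le (e j)) (mem_univ i))
  rw [h, finsuppAntidiag, sum_map]
  exact sum_attach (piAntidiag univ u) g

namespace PowerSeries

variable {K : Type*} [Field K] [CharZero K]

theorem coeff_rescale_exp (c : K) (n : ℕ) :
    coeff n (rescale c (exp K)) = c ^ n / n.factorial := by
  simp [coeff_rescale, coeff_exp, div_eq_mul_inv]

theorem rescale_exp_add (a b : K) :
    rescale (a + b) (exp K) = rescale a (exp K) * rescale b (exp K) :=
  (exp_mul_exp_eq_exp_add a b).symm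

theorem rescale_exp_sum {ι : Type*} (s : Finset ι) (f : ι → K) :
    rescale (∑ i ∈ s, f i) (exp K) = ∏ i ∈ s, rescale (f i) (exp K) := by
  induction s using Finset.cons_induction with
  | empty => simp
  | cons i s hi ih => rw [sum_cons, prod_cons, rescale_exp_add, ih]

theorem rescale_exp_pow (c : K) (k : ℕ) : rescale c (exp K) ^ k = rescale (k * c) (exp K) := by
  rw [← map_pow, exp_pow_eq_rescale_exp, rescale_rescale, mul_comm]

theorem geom_sum_rescale_exp_mul (c : K) (M : ℕ) :
    (∑ j ∈ range M, rescale (j * c) (exp K)) * (rescale c (exp K) - 1) =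
      rescale (M * c) (exp K) - 1 := by
  simp_rw [← rescale_exp_pow]
  exact geom_sum_mul _ M

theorem derivative_rescale_exp (c : K) :
    d⁄dX K (rescale c (exp K)) = C c * rescale c (exp K) := by
  ext n
  rw [coeff_derivative, coeff_C_mul, coeff_rescale_exp, coeff_rescale_exp, Nat.factorial_succ]
  push_cast
  field_simp
  ring

theorem coeff_X_mul_derivative {R : Type*} [CommSemiring R] (f : R⟦X⟧) (n : ℕ) :
    coeff n (X * d⁄dX R f) = n * coeff n f := by
  cases n with
  | zero => simp
  | succ n => rw [coeff_succ_X_mul, coeff_derivative, mul_comm, Nat.cast_succ]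

variable (K) in
/-- The Todd series `X / (1 - e^{-X})`. -/
noncomputable def toddSeries : K⟦X⟧ := rescale (-1) (bernoulliPowerSeries K)

theorem coeff_rescale_toddSeries (c : K) (n : ℕ) :
    coeff n (rescale c (toddSeries K)) = (-c) ^ n * (bernoulli n / n.factorial) := by
  simp [toddSeries, rescale_rescale, coeff_rescale, bernoulliPowerSeries]

theorem rescale_toddSeries_mul (c : K) :
    rescale c (toddSeries K) * (1 - rescale (-c) (exp K)) = C c * X := by
  have h := congrArg (rescale (-c)) (bernoulliPowerSeries_mul_exp_sub_one K)
  rw [map_mul, map_sub, map_one, rescale_X, map_neg] at h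
  rw [toddSeries, rescale_rescale, ← neg_sub, mul_neg, neg_eq_iff_eq_neg, ← neg_mul]
  simpa using h

theorem toddSeries_mul : toddSeries K * (1 - rescale (-1) (exp K)) = X := by
  simpa using rescale_toddSeries_mul (1 : K)

theorem X_mul_derivative_toddSeries :
    X * d⁄dX K (toddSeries K) = toddSeries K - rescale (-1) (exp K) * toddSeries K ^ 2 := by
  have h := congrArg (d⁄dX K) (toddSeries_mul (K := K))
  rw [Derivation.leibniz, map_sub, Derivation.map_one_eq_zero, derivative_rescale_exp,
    derivative_X, smul_eq_mul, smul_eq_mul, map_neg, map_one] at h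
  linear_combination toddSeries K * h - d⁄dX K (toddSeries K) * toddSeries_mul (K := K)

theorem X_mul_derivative_rescale_exp_mul_toddSeries_pow (z : K) (k : ℕ) :
    X * d⁄dX K (rescale (z + 1) (exp K) * toddSeries K ^ (k + 1)) =
      C (z + 1) * X * (rescale (z + 1) (exp K) * toddSeries K ^ (k + 1)) +
        (k + 1 : K⟦X⟧) * (rescale (z + 1) (exp K) * toddSeries K ^ (k + 1)) -
        (k + 1 : K⟦X⟧) * (rescale z (exp K) * toddSeries K ^ (k + 2)) := by
  have hE : rescale (z + 1) (exp K) * rescale (-1) (exp K) = rescale z (exp K) := by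
    rw [← rescale_exp_add, add_neg_cancel_right]
  rw [Derivation.leibniz, Derivation.leibniz_pow, derivative_rescale_exp, Nat.add_sub_cancel,
    smul_eq_mul, smul_eq_mul, nsmul_eq_mul, ← hE]
  push_cast
  linear_combination (k + 1 : K⟦X⟧) * rescale (z + 1) (exp K) * toddSeries K ^ k *
    X_mul_derivative_toddSeries (K := K)

theorem coeff_rescale_exp_mul_toddSeries_pow_succ (z : K) (k : ℕ) :
    (k + 1) * coeff (k + 1) (rescale z (exp K) * toddSeries K ^ (k + 2)) =
      (z + 1) * coeff k (rescale (z + 1) (exp K) * toddSeries K ^ (k + 1)) := by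
  have h := congrArg (coeff (k + 1)) (X_mul_derivative_rescale_exp_mul_toddSeries_pow z k)
  rw [coeff_X_mul_derivative, map_sub, map_add, mul_assoc, coeff_C_mul, coeff_succ_X_mul] at h
  simp only [← map_natCast (C (R := K)), ← map_one (C (R := K)), ← map_add, coeff_C_mul] at h
  push_cast at h
  linear_combination h

theorem coeff_rescale_exp_mul_toddSeries_pow (z : K) (m : ℕ) :
    coeff m (rescale z (exp K) * toddSeries K ^ (m + 1)) =
      (∏ l ∈ Icc 1 m, (z + l)) / m.factorial := by
  induction m generalizing z with
  | zero =>
    rw [zero_add, pow_one, coeff_mul, Nat.antidiagonal_zero, sum_singleton]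
    simp [toddSeries, coeff_rescale, bernoulliPowerSeries]
  | succ k ih =>
    have hprod : ∏ l ∈ Icc 1 (k + 1), (z + l) = (z + 1) * ∏ l ∈ Icc 1 k, (z + 1 + l) := by
      simp only [← Ico_add_one_right_eq_Icc, prod_Ico_eq_prod_range, Nat.add_sub_cancel]
      rw [prod_range_succ', mul_comm]
      push_cast
      exact congrArg (_ * ·) (prod_congr rfl fun i _ => by ring)
    have hk : (k + 1 : K) ≠ 0 := Nat.cast_add_one_ne_zero k
    apply mul_left_cancel₀ hk
    rw [coeff_rescale_exp_mul_toddSeries_pow_succ, ih, hprod, Nat.factorial_succ]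
    push_cast
    field_simp

theorem sum_rescale_exp_eq_mul_prod {ι : Type*} [Fintype ι] [DecidableEq ι] (a : ι → K)
    (M : ι → ℕ) (z : K) :
    ∑ t ∈ Fintype.piFinset (fun i => range (M i)), rescale (z - ∑ i, a i * t i) (exp K) =
      rescale z (exp K) * ∏ i, ∑ j ∈ range (M i), rescale (j * -a i) (exp K) := by
  rw [prod_univ_sum, mul_sum]
  refine sum_congr rfl fun t _ => ?_
  rw [← rescale_exp_sum, ← rescale_exp_add, sub_eq_add_neg, ← sum_neg_distrib]
  simp only [mul_neg, mul_comm]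

theorem sum_rescale_exp_mul_rescale_toddSeries_pow {ι : Type*} [Fintype ι] [DecidableEq ι]
    (a : ι → K) (M : ι → ℕ) (D : K) (hD : ∀ i, a i * M i = D) (z : K) :
    C (∏ i, a i) * ((∑ t ∈ Fintype.piFinset (fun i => range (M i)),
        rescale (z - ∑ i, a i * t i) (exp K)) * rescale D (toddSeries K) ^ Fintype.card ι) =
      C (D ^ Fintype.card ι) * (rescale z (exp K) * ∏ i, rescale (a i) (toddSeries K)) := by
  have hgeom : ∀ i, (∑ j ∈ range (M i), rescale (j * -a i) (exp K)) *
      (1 - rescale (-a i) (exp K)) = 1 - rescale (-D) (exp K) := fun i => by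
    have h := geom_sum_rescale_exp_mul (-a i) (M i)
    rw [mul_neg, mul_comm (M i : K), hD i] at h
    linear_combination -h
  set n := Fintype.card ι
  have hXa : X ^ n * C (∏ i, a i) =
      ∏ i, rescale (a i) (toddSeries K) * (1 - rescale (-a i) (exp K)) := by
    simp_rw [rescale_toddSeries_mul]
    rw [prod_mul_distrib, ← map_prod, prod_const, card_univ, mul_comm]
  have hXD : X ^ n * C (D ^ n) =
      rescale D (toddSeries K) ^ n * (1 - rescale (-D) (exp K)) ^ n := by
    rw [← mul_pow, rescale_toddSeries_mul, mul_pow, map_pow, mul_comm]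
  refine mul_left_cancel₀ (pow_ne_zero n X_ne_zero) ?_
  rw [sum_rescale_exp_eq_mul_prod]
  calc X ^ n * (C (∏ i, a i) * (rescale z (exp K) *
          (∏ i, ∑ j ∈ range (M i), rescale (j * -a i) (exp K)) *
            rescale D (toddSeries K) ^ n))
      = rescale z (exp K) * (∏ i, ((∑ j ∈ range (M i), rescale (j * -a i) (exp K)) *
          (1 - rescale (-a i) (exp K)))) * (∏ i, rescale (a i) (toddSeries K)) *
            rescale D (toddSeries K) ^ n := by
        rw [← mul_assoc, hXa, prod_mul_distrib, prod_mul_distrib]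
        ring
    _ = rescale z (exp K) * (1 - rescale (-D) (exp K)) ^ n *
          (∏ i, rescale (a i) (toddSeries K)) * rescale D (toddSeries K) ^ n := by
        rw [prod_congr rfl fun i _ => hgeom i, prod_const, card_univ]
    _ = X ^ n * (C (D ^ n) * (rescale z (exp K) * ∏ i, rescale (a i) (toddSeries K))) := by
        rw [← mul_assoc, hXD]
        ring

theorem coeff_rescale_exp_mul_rescale_toddSeries_pow {c : K} (hc : c ≠ 0) (z : K) (m : ℕ) :
    coeff m (rescale z (exp K) * rescale c (toddSeries K) ^ (m + 1)) =
      c ^ m * ((∏ l ∈ Icc 1 m, (z / c + l)) / m.factorial) := by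
  have hz : rescale z (exp K) = rescale c (rescale (z / c) (exp K)) := by
    rw [rescale_rescale, div_mul_cancel₀ z hc]
  rw [hz, ← map_pow, ← map_mul, coeff_rescale, coeff_rescale_exp_mul_toddSeries_pow]

theorem coeff_prod_rescale_toddSeries {ι : Type*} [Fintype ι] [DecidableEq ι] (a : ι → K)
    (u : ℕ) :
    coeff u (∏ i, rescale (a i) (toddSeries K)) = (-1) ^ u *
      ∑ e ∈ (Fintype.piFinset fun _ : ι => range (u + 1)).filter (fun e => ∑ i, e i = u),
        ∏ i, ((bernoulli (e i) : K) / (e i).factorial * a i ^ e i) := by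
  rw [coeff_prod, mul_sum,
    sum_finsuppAntidiag_univ u fun e => ∏ i, coeff (e i) (rescale (a i) (toddSeries K))]
  refine sum_congr rfl fun e he => ?_
  rw [← (mem_filter.1 he).2, ← prod_pow_eq_pow_sum, ← prod_mul_distrib]
  refine prod_congr rfl fun i _ => ?_
  rw [coeff_rescale_toddSeries, neg_pow]
  ring

theorem coeff_rescale_exp_mul_prod_rescale_toddSeries {ι : Type*} [Fintype ι] [DecidableEq ι]
    (z : K) (a : ι → K) (m : ℕ) :
    coeff m (rescale z (exp K) * ∏ i, rescale (a i) (toddSeries K)) =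
      ∑ u ∈ range (m + 1), ((-1) ^ u / (m - u).factorial) *
        ∑ e ∈ (Fintype.piFinset fun _ : ι => range (u + 1)).filter (fun e => ∑ i, e i = u),
          (∏ i, ((bernoulli (e i) : K) / (e i).factorial * a i ^ e i)) * z ^ (m - u) := by
  rw [mul_comm, coeff_mul, Nat.sum_antidiagonal_eq_sum_range_succ
    (fun p q => coeff p (∏ i, rescale (a i) (toddSeries K)) * coeff q (rescale z (exp K)))]
  refine sum_congr rfl fun u _ => ?_
  rw [coeff_prod_rescale_toddSeries, coeff_rescale_exp, mul_sum, mul_sum, sum_mul]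
  refine sum_congr rfl fun e _ => ?_
  ring

end PowerSeries

/-- the two closed forms of the polynomial part of `p_a(n)` agree. -/
theorem stmt14 (r : ℕ) (hr : 1 ≤ r) (a : Fin r → ℕ) (ha : ∀ i, 0 < a i)
    (D : ℕ) (hD0 : 0 < D) (hD : ∀ i, a i ∣ D) (n : ℤ) :
    (1 / ((D : ℚ) * (Nat.factorial (r - 1) : ℚ))) *
      (∑ t ∈ Fintype.piFinset fun i => Finset.range (D / a i),
        ∏ l ∈ Finset.Icc 1 (r - 1),
          (((n : ℚ) - ((∑ i, a i * t i : ℕ) : ℚ)) / (D : ℚ) + (l : ℚ)))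
    = (1 / (∏ i, (a i : ℚ))) *
      ∑ u ∈ Finset.range r,
        ((-1 : ℚ) ^ u / (Nat.factorial (r - 1 - u) : ℚ)) *
        ∑ e ∈ (Fintype.piFinset fun _ : Fin r => Finset.range (u + 1)).filter
            (fun e => ∑ i, e i = u),
          (∏ i, (bernoulli (e i) / (Nat.factorial (e i) : ℚ) * (a i : ℚ) ^ (e i))) *
          (n : ℚ) ^ (r - 1 - u) := by
  obtain ⟨m, rfl⟩ : ∃ m, r = m + 1 := ⟨r - 1, by omega⟩
  have hDq : (D : ℚ) ≠ 0 := by positivity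
  have hA : ∏ i, (a i : ℚ) ≠ 0 := prod_ne_zero_iff.2 fun i _ => by have := ha i; positivity
  have hfac : (m.factorial : ℚ) ≠ 0 := by positivity
  have hMul : ∀ i, (a i : ℚ) * ((D / a i : ℕ) : ℚ) = D := fun i => by
    rw [← Nat.cast_mul, Nat.mul_div_cancel' (hD i)]
  have hcoeff := congrArg (PowerSeries.coeff m)
    (PowerSeries.sum_rescale_exp_mul_rescale_toddSeries_pow _ _ _ hMul n)
  rw [PowerSeries.coeff_C_mul, PowerSeries.coeff_C_mul, sum_mul, map_sum,
    PowerSeries.coeff_rescale_exp_mul_prod_rescale_toddSeries, Fintype.card_fin] at hcoeff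
  simp only [PowerSeries.coeff_rescale_exp_mul_rescale_toddSeries_pow hDq, ← mul_sum, ← sum_div,
    Rat.cast_id] at hcoeff
  rw [mul_left_comm, pow_succ, mul_assoc] at hcoeff
  have hcancel := mul_left_cancel₀ (pow_ne_zero m hDq) hcoeff
  rw [mul_div_assoc', div_eq_iff hfac] at hcancel
  simp only [Nat.add_sub_cancel]
  push_cast
  rw [div_mul_eq_mul_div, one_mul, div_mul_eq_mul_div, one_mul, div_eq_div_iff (by positivity) hA]
  linear_combination hcancel
end
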